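/- arXiv:math/0103197 — 5 statements merged into one kernel-verified Lean document; each statement's English description precedes it below -/
import Mathlib

section
/- Let K be a field, R = K[x_0,…,x_n], let I ⊆ J be homogeneous ideals of R, and let A ∈ R be a homogeneous element of degree d such that I :_R (A) = I. Then for every integer t, h_{R/(I + A·J)}(t) = h_{R/I}(t) − h_{R/I}(t − d) + h_{R/J}(t − d). -/
open MvPolynomial

/-- An ideal of a polynomial ring is homogeneous (with respect to the standard grading)
if it contains all homogeneous components of each of its elements. -/
def Ideal.IsStdHomogeneous {K : Type} [Field K] {n : ℕ}
    (I : Ideal (MvPolynomial (Fin (n + 1)) K)) : Prop :=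
  ∀ p ∈ I, ∀ i : ℕ, MvPolynomial.homogeneousComponent i p ∈ I

/-- The Hilbert function of `R/I`:  `h_{R/I}(t)` is the `K`-dimension of the degree `t`
graded component of `R/I`, i.e. of `R_t/(I ∩ R_t)`; it is `0` in negative degrees. -/
noncomputable def hilbertFn {K : Type} [Field K] {n : ℕ}
    (I : Ideal (MvPolynomial (Fin (n + 1)) K)) (t : ℤ) : ℕ :=
  if t < 0 then 0
  else
    Module.finrank K
      ((MvPolynomial.homogeneousSubmodule (Fin (n + 1)) K t.toNat) ⧸
        Submodule.comap (MvPolynomial.homogeneousSubmodule (Fin (n + 1)) K t.toNat).subtype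
          (Submodule.restrictScalars K I))

/-!
In degree `t = d + m` the degree-`t` part of `I + A·J` is `I_t + A·J_m`, and
`I_t ∩ A·J_m = A·I_m` because `A` is a nonzerodivisor modulo `I`. Multiplication by `A` is
injective, so `dim (I + A·J)_t = dim I_t + dim J_m - dim I_m`, which is the formula read
off `R_t/(I + A·J)_t`. In degrees `t < d` the ideal `A·J` contributes nothing. If `A = 0`, then
`I = I : (0)` is the unit ideal, and so are `J` and `I + A·J`.
-/

attribute [local instance] MvPolynomial.gradedAlgebra

namespace MvPolynomial

variable {σ R : Type*} [CommSemiring R]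

theorem coe_decompose_homogeneousSubmodule (φ : MvPolynomial σ R) (i : ℕ) :
    (DirectSum.decompose (homogeneousSubmodule σ R) φ i : MvPolynomial σ R) =
      homogeneousComponent i φ :=
  decomposition.decompose'_apply φ i

instance finiteDimensional_homogeneousSubmodule [Finite σ] {K : Type*} [Field K] (m : ℕ) :
    FiniteDimensional K (homogeneousSubmodule σ K m) :=
  Submodule.finiteDimensional_of_le (S₂ := restrictTotalDegree σ K m)
    fun _ hp => (mem_restrictTotalDegree _ _ _).mpr hp.totalDegree_le

namespace IsHomogeneous

variable {d : ℕ} {A : MvPolynomial σ R}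

theorem homogeneousComponent_add_mul (hA : A.IsHomogeneous d) (q : MvPolynomial σ R) (m : ℕ) :
    homogeneousComponent (d + m) (A * q) = A * homogeneousComponent m q := by
  rw [← coe_decompose_homogeneousSubmodule,
    DirectSum.coe_decompose_mul_of_left_mem_of_le _ hA (Nat.le_add_right d m),
    Nat.add_sub_cancel_left, coe_decompose_homogeneousSubmodule]

theorem homogeneousComponent_mul_of_lt (hA : A.IsHomogeneous d) (q : MvPolynomial σ R) {k : ℕ}
    (hk : k < d) : homogeneousComponent k (A * q) = 0 := by
  rw [← coe_decompose_homogeneousSubmodule,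
    DirectSum.coe_decompose_mul_of_left_mem_of_not_le _ hA (Nat.not_le_of_lt hk)]

noncomputable def mulLeft (hA : A.IsHomogeneous d) (m : ℕ) :
    homogeneousSubmodule σ R m →ₗ[R] homogeneousSubmodule σ R (d + m) :=
  (LinearMap.mulLeft R A).restrict fun _ hx => hA.mul hx

@[simp]
theorem coe_mulLeft_apply (hA : A.IsHomogeneous d) (m : ℕ) (x : homogeneousSubmodule σ R m) :
    (hA.mulLeft m x : MvPolynomial σ R) = A * x :=
  rfl

theorem mulLeft_injective {R : Type*} [CommRing R] [IsDomain R] {A : MvPolynomial σ R}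
    (hA : A.IsHomogeneous d) (hA0 : A ≠ 0) (m : ℕ) : Function.Injective (hA.mulLeft m) :=
  fun _ _ h => Subtype.ext (mul_left_cancel₀ hA0 (congrArg Subtype.val h))

end IsHomogeneous

end MvPolynomial

namespace Ideal

open MvPolynomial

variable {σ R : Type*} [CommSemiring R]

noncomputable def degreePart (I : Ideal (MvPolynomial σ R)) (m : ℕ) :
    Submodule R (homogeneousSubmodule σ R m) :=
  (I.restrictScalars R).comap (homogeneousSubmodule σ R m).subtype

variable {I J : Ideal (MvPolynomial σ R)} {d : ℕ} {A : MvPolynomial σ R}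

@[simp]
theorem mem_degreePart {m : ℕ} {x : homogeneousSubmodule σ R m} :
    x ∈ I.degreePart m ↔ (x : MvPolynomial σ R) ∈ I :=
  Iff.rfl

theorem degreePart_mono (h : I ≤ J) (m : ℕ) : I.degreePart m ≤ J.degreePart m :=
  fun _ hx => h hx

theorem degreePart_sup_span_mul_of_lt (hI : I.IsHomogeneous (homogeneousSubmodule σ R))
    (hA : A.IsHomogeneous d) {k : ℕ} (hk : k < d) :
    (I ⊔ span {A} * J).degreePart k = I.degreePart k := by
  refine le_antisymm (fun x hx => ?_) (degreePart_mono le_sup_left k)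
  obtain ⟨p, hp, _, hAq, hx⟩ := Submodule.mem_sup.mp (mem_degreePart.mp hx)
  obtain ⟨q, -, rfl⟩ := mem_span_singleton_mul.mp hAq
  have hxp : (x : MvPolynomial σ R) = homogeneousComponent k p := by
    rw [← homogeneousComponent_eq_self x.2, ← hx, map_add,
      hA.homogeneousComponent_mul_of_lt q hk, add_zero]
  exact mem_degreePart.mpr (hxp ▸ homogeneousComponent_mem_of_mem hI hp k)

theorem degreePart_sup_span_mul_add (hI : I.IsHomogeneous (homogeneousSubmodule σ R))
    (hJ : J.IsHomogeneous (homogeneousSubmodule σ R)) (hA : A.IsHomogeneous d) (m : ℕ) :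
    (I ⊔ span {A} * J).degreePart (d + m) =
      I.degreePart (d + m) ⊔ (J.degreePart m).map (hA.mulLeft m) := by
  refine le_antisymm (fun x hx => ?_) (sup_le (degreePart_mono le_sup_left _) ?_)
  · obtain ⟨p, hp, _, hAq, hx⟩ := Submodule.mem_sup.mp (mem_degreePart.mp hx)
    obtain ⟨q, hq, rfl⟩ := mem_span_singleton_mul.mp hAq
    refine Submodule.mem_sup.mpr
      ⟨⟨_, homogeneousComponent_mem (d + m) p⟩, homogeneousComponent_mem_of_mem hI hp _,
        _, Submodule.mem_map_of_mem (f := hA.mulLeft m) (r := ⟨_, homogeneousComponent_mem m q⟩)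
          (homogeneousComponent_mem_of_mem hJ hq m), Subtype.ext ?_⟩
    rw [Submodule.coe_add, hA.coe_mulLeft_apply, ← hA.homogeneousComponent_add_mul, ← map_add,
      hx, homogeneousComponent_eq_self x.2]
  · rintro _ ⟨y, hy, rfl⟩
    exact mem_sup_right (mul_mem_mul (mem_span_singleton_self A) hy)

theorem degreePart_inf_map_mulLeft (hIJ : I ≤ J) (hA : A.IsHomogeneous d)
    (hcolon : I.colon (span {A}) = I) (m : ℕ) :
    I.degreePart (d + m) ⊓ (J.degreePart m).map (hA.mulLeft m) =
      (I.degreePart m).map (hA.mulLeft m) := by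
  refine le_antisymm ?_ (le_inf ?_ (Submodule.map_mono (degreePart_mono hIJ m)))
  · rintro _ ⟨hAy, y, -, rfl⟩
    have hyI : (y : MvPolynomial σ R) ∈ I :=
      hcolon ▸ mem_colon_span_singleton.mpr (mul_comm A y ▸ hAy)
    exact Submodule.mem_map_of_mem hyI
  · rintro _ ⟨y, hy, rfl⟩
    exact I.mul_mem_left A hy

theorem finrank_degreePart_sup_span_mul_add [Finite σ] {K : Type*} [Field K]
    {I J : Ideal (MvPolynomial σ K)} {A : MvPolynomial σ K} (hIJ : I ≤ J)
    (hI : I.IsHomogeneous (homogeneousSubmodule σ K))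
    (hJ : J.IsHomogeneous (homogeneousSubmodule σ K)) (hA : A.IsHomogeneous d)
    (hcolon : I.colon (span {A}) = I) (hA0 : A ≠ 0) (m : ℕ) :
    Module.finrank K ((I ⊔ span {A} * J).degreePart (d + m)) +
        Module.finrank K (I.degreePart m) =
      Module.finrank K (I.degreePart (d + m)) + Module.finrank K (J.degreePart m) := by
  have hinj := hA.mulLeft_injective hA0 m
  rw [degreePart_sup_span_mul_add hI hJ hA,
    (Submodule.equivMapOfInjective _ hinj (I.degreePart m)).finrank_eq,
    (Submodule.equivMapOfInjective _ hinj (J.degreePart m)).finrank_eq,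
    ← degreePart_inf_map_mulLeft hIJ hA hcolon, Submodule.finrank_sup_add_finrank_inf_eq]

end Ideal

section HilbertFunction

variable {K : Type} [Field K] {n : ℕ}

theorem Ideal.IsStdHomogeneous.isHomogeneous {I : Ideal (MvPolynomial (Fin (n + 1)) K)}
    (hI : I.IsStdHomogeneous) : I.IsHomogeneous (homogeneousSubmodule (Fin (n + 1)) K) :=
  fun i p hp => (coe_decompose_homogeneousSubmodule p i).symm ▸ hI p hp i

theorem hilbertFn_of_neg (I : Ideal (MvPolynomial (Fin (n + 1)) K)) {t : ℤ} (ht : t < 0) :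
    hilbertFn I t = 0 :=
  if_pos ht

theorem hilbertFn_natCast (I : Ideal (MvPolynomial (Fin (n + 1)) K)) (m : ℕ) :
    hilbertFn I m = Module.finrank K (homogeneousSubmodule (Fin (n + 1)) K m ⧸ I.degreePart m) :=
  if_neg (Int.natCast_nonneg m).not_gt

theorem hilbertFn_natCast_add_finrank (I : Ideal (MvPolynomial (Fin (n + 1)) K)) (m : ℕ) :
    hilbertFn I m + Module.finrank K (I.degreePart m) =
      Module.finrank K (homogeneousSubmodule (Fin (n + 1)) K m) := by
  rw [hilbertFn_natCast]
  exact Submodule.finrank_quotient_add_finrank _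

end HilbertFunction

/-- Lemma 3.4(v) (Basic double G-linkage, KMMNP):  if `I ⊆ J` are homogeneous ideals of
`R = K[x_0,…,x_n]` and `A` is a homogeneous element of degree `d` with `I : (A) = I`, then
`h_{R/(I + A·J)}(t) = h_{R/I}(t) − h_{R/I}(t−d) + h_{R/J}(t−d)` for all `t`. -/
theorem basic_double_link_hilbert_function {K : Type} [Field K] {n : ℕ}
    (I J : Ideal (MvPolynomial (Fin (n + 1)) K))
    (hIJ : I ≤ J) (hI : I.IsStdHomogeneous) (hJ : J.IsStdHomogeneous)
    (d : ℕ) (A : MvPolynomial (Fin (n + 1)) K) (hA : A.IsHomogeneous d)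
    (hcolon : Submodule.colon I (Ideal.span {A}) = I) :
    ∀ t : ℤ,
      (hilbertFn (I ⊔ Ideal.span {A} * J) t : ℤ) =
        (hilbertFn I t : ℤ) - hilbertFn I (t - d) + hilbertFn J (t - d) := by
  intro t
  by_cases hA0 : A = 0
  · obtain rfl : I = ⊤ := by simpa [hA0, Submodule.colon_singleton_zero] using hcolon.symm
    obtain rfl : J = ⊤ := top_le_iff.mp hIJ
    rw [top_sup_eq]
    ring
  rcases lt_or_ge t 0 with ht | ht
  · simp [hilbertFn_of_neg, ht, show t - d < 0 by omega]
  obtain ⟨k, rfl⟩ := Int.eq_ofNat_of_zero_le ht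
  rcases lt_or_ge k d with hk | hk
  · rw [hilbertFn_of_neg _ (show (k : ℤ) - d < 0 by omega),
      hilbertFn_of_neg _ (show (k : ℤ) - d < 0 by omega), hilbertFn_natCast, hilbertFn_natCast,
      Ideal.degreePart_sup_span_mul_of_lt hI.isHomogeneous hA hk]
    ring
  obtain ⟨m, rfl⟩ := Nat.exists_eq_add_of_le hk
  have hdim := Ideal.finrank_degreePart_sup_span_mul_add hIJ hI.isHomogeneous
    hJ.isHomogeneous hA hcolon hA0 m
  have hS := hilbertFn_natCast_add_finrank (I ⊔ Ideal.span {A} * J) (d + m)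
  have hI₁ := hilbertFn_natCast_add_finrank I (d + m)
  have hI₀ := hilbertFn_natCast_add_finrank I m
  have hJ₀ := hilbertFn_natCast_add_finrank J m
  rw [show ((d + m : ℕ) : ℤ) - d = m by push_cast; ring]
  omega
end

section
/- Let J be an Artinian lex-segment ideal in T = K[z_1,…,z_c] of initial degree α, and let t be the largest integer with [T/J]_t ≠ 0. Then there exist uniquely determined ideals I_0 ⊆ I_1 ⊆ ⋯ ⊆ I_{α−1} ⊊ I_α = T, each I_j for j < α being the extension to T of a monomial ideal of T̄ = K[z_2,…,z_c], such that J = Σ_{j=0}^{α} z_1^j·I_j; moreover (z_2,…,z_c)^{t+1−j} ⊆ I_j ⊆ (z_2,…,z_c)^{α−j} for 0 ≤ j ≤ α−1, each I_j ∩ T̄ is an Artinian lex-segment ideal of T̄, and for 0 ≤ j ≤ α−2 the initial degree of I_j is strictly greater than 1 + max{ i : [T̄/(I_{j+1} ∩ T̄)]_i ≠ 0 }. -/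
/-!
`I_j` is generated by the monomials `u` of `T̄` with `z_1^j u ∈ J`. Since `J` is monomial and
contains `z_1^α` (the lex-largest monomial of degree `α`), writing each monomial of `J` as
`z_1^k u` gives `J = Σ z_1^j I_j`, and comparing monomials shows that every decomposition has
these `I_j`. The bounds on `I_j` say that monomials of `J` have degree at least `α` and monomials
of degree above `t` lie in `J`. For the gap between initial degrees: in lex order the exponent of
`z_1` comes first, so if `z_1^j u ∈ J` and `deg u ≤ deg u' + 1`, padding `u` with another
variable up to degree `deg u' + 1` gives a monomial of `J` below `z_1^{j+1} u'`, which therefore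
lies in `J` as well.
-/

open MvPolynomial

namespace GorensteinSI

/-- `b <ₗ a` in the lexicographic order on monomials (identified with their exponent
vectors): the first nonzero coordinate of the difference is negative. -/
def lexLT {c : ℕ} (b a : Fin c →₀ ℕ) : Prop :=
  ∃ i : Fin c, b i < a i ∧ ∀ j : Fin c, j < i → b j = a j

/-- A monomial ideal: an ideal containing, with any element, all monomials in its
support. -/
def IsMonomialIdeal {K : Type} [Field K] {c : ℕ}
    (J : Ideal (MvPolynomial (Fin c) K)) : Prop :=
  ∀ p ∈ J, ∀ a ∈ p.support, (monomial a (1 : K)) ∈ J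

/-- A lex-segment ideal of `T = K[z_1,…,z_c]`: a monomial ideal such that whenever it
contains a monomial `m₂` it contains every monomial `m₁ > m₂` of the same degree in the
(degree-)lexicographic order. -/
def IsLexSegmentIdeal {K : Type} [Field K] {c : ℕ}
    (J : Ideal (MvPolynomial (Fin c) K)) : Prop :=
  IsMonomialIdeal J ∧
    ∀ a b : Fin c →₀ ℕ, a.degree = b.degree → lexLT b a →
      (monomial b (1 : K)) ∈ J → (monomial a (1 : K)) ∈ J

/-- The irrelevant ideal `(z_2,…,z_c)` of `T̄ = K[z_2,…,z_c]`, extended to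
`T = K[z_1,…,z_c]` (the variable `z_1` has index `0`). -/
noncomputable def mBar (K : Type) [Field K] (c : ℕ) : Ideal (MvPolynomial (Fin c) K) :=
  Ideal.span {q | ∃ i : Fin c, i.1 ≠ 0 ∧ q = X i}

/-- The defining properties of the decomposition `J = Σ_{j=0}^{α} z_1^j · I_j` of an
Artinian lex-segment ideal: the `I_j` form an increasing chain with `I_{α-1} ⊊ I_α = T`,
each `I_j` (for `j < α`) is the extension of a monomial ideal of `T̄ = K[z_2,…,z_c]`,
and the sum of the `z_1^j·I_j` is `J`. -/
def IsDecompositionOf {K : Type} [Field K] {c : ℕ} (hc : 1 ≤ c)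
    (J : Ideal (MvPolynomial (Fin c) K)) (α : ℕ)
    (I : ℕ → Ideal (MvPolynomial (Fin c) K)) : Prop :=
  (∀ j, j < α → I j ≤ I (j + 1)) ∧ I α = ⊤ ∧ (1 ≤ α → I (α - 1) ≠ ⊤) ∧
    (∀ j, j < α → ∃ S : Set (Fin c →₀ ℕ),
      (∀ a ∈ S, ∀ i : Fin c, i.1 = 0 → a i = 0) ∧
      I j = Ideal.span ((fun a => monomial a (1 : K)) '' S)) ∧
    J = ∑ j ∈ Finset.range (α + 1),
          Ideal.span {(X (⟨0, by omega⟩ : Fin c) : MvPolynomial (Fin c) K) ^ j} * I j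

section MonomialSpan

variable {σ R : Type*} [CommSemiring R]

theorem mem_sum_of_mem {ι : Type*} {f : ι → Ideal R} {s : Finset ι} {k : ι} (hk : k ∈ s) {x : R}
    (hx : x ∈ f k) : x ∈ ∑ i ∈ s, f i := by
  rw [Ideal.sum_eq_sup]
  exact Finset.le_sup (f := f) hk hx

theorem monomial_mem_of_le {J : Ideal (MvPolynomial σ R)} {s m : σ →₀ ℕ} (h : s ≤ m)
    (hs : monomial s (1 : R) ∈ J) : monomial m (1 : R) ∈ J :=
  J.mem_of_dvd (monomial_dvd_monomial.2 ⟨Or.inr h, one_dvd _⟩) hs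

theorem mem_of_forall_monomial_mem {J : Ideal (MvPolynomial σ R)} {p : MvPolynomial σ R}
    (h : ∀ m ∈ p.support, monomial m (1 : R) ∈ J) : p ∈ J := by
  rw [p.as_sum]
  refine J.sum_mem fun m hm => ?_
  rw [← mul_one (coeff m p), ← C_mul_monomial]
  exact J.mul_mem_left _ (h m hm)

theorem _root_.MvPolynomial.IsHomogeneous.degree_eq_of_mem_support {p : MvPolynomial σ R}
    {n : ℕ} (hp : p.IsHomogeneous n) {m : σ →₀ ℕ} (hm : m ∈ p.support) : m.degree = n :=
  (hp.degree_eq_sum_deg_support hm).symm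

theorem monomial_mem_of_lt_degree {J : Ideal (MvPolynomial σ R)} {t : ℕ}
    (ht : ∀ t' : ℕ, (∃ p : MvPolynomial σ R, p.IsHomogeneous t' ∧ p ∉ J) → t' ≤ t)
    {a : σ →₀ ℕ} (ha : t < a.degree) : monomial a (1 : R) ∈ J := by
  by_contra h
  exact ha.not_ge (ht _ ⟨_, isHomogeneous_monomial 1 rfl, h⟩)

theorem le_degree_of_monomial_mem [Nontrivial R] {J : Ideal (MvPolynomial σ R)} {α : ℕ}
    (hα : ∀ β : ℕ, (∃ p ∈ J, p ≠ 0 ∧ p.IsHomogeneous β) → α ≤ β) {a : σ →₀ ℕ}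
    (ha : monomial a (1 : R) ∈ J) : α ≤ a.degree :=
  hα _ ⟨_, ha, monomial_eq_zero.not.2 one_ne_zero, isHomogeneous_monomial 1 rfl⟩

theorem monomial_mem_span_monomial_iff [Nontrivial R] {E : Set (σ →₀ ℕ)} {m : σ →₀ ℕ} :
    monomial m (1 : R) ∈ Ideal.span ((monomial · (1 : R)) '' E) ↔ ∃ e ∈ E, e ≤ m := by
  classical
  simp [mem_ideal_span_monomial_image, support_monomial]

theorem single_add_le_single_add_iff {i : σ} {k j : ℕ} {s a : σ →₀ ℕ} (hs : s i = 0)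
    (ha : a i = 0) : Finsupp.single i k + s ≤ Finsupp.single i j + a ↔ k ≤ j ∧ s ≤ a := by
  refine ⟨fun h => ⟨by simpa [hs, ha] using h i, fun x => ?_⟩,
    fun h => add_le_add (Finsupp.single_mono h.1) h.2⟩
  rcases eq_or_ne x i with rfl | hx
  · simp [hs]
  · simpa [Finsupp.single_apply, hx.symm] using h x

theorem span_monomial_mul_span_monomial_image (e : σ →₀ ℕ) (E : Set (σ →₀ ℕ)) :
    Ideal.span {monomial e (1 : R)} * Ideal.span ((monomial · (1 : R)) '' E) =
      Ideal.span ((monomial · (1 : R)) '' ((e + ·) '' E)) := by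
  rw [Ideal.span_mul_span', Set.singleton_mul, Set.image_image, Set.image_image]
  simp only [monomial_mul, one_mul]

theorem sum_span_monomial_image {ι : Type*} (s : Finset ι) (E : ι → Set (σ →₀ ℕ)) :
    ∑ k ∈ s, Ideal.span ((monomial · (1 : R)) '' E k) =
      Ideal.span ((monomial · (1 : R)) '' ⋃ k ∈ s, E k) := by
  rw [Ideal.sum_eq_sup, Finset.sup_eq_iSup, Set.image_iUnion₂, Ideal.span,
    Submodule.span_iUnion₂]

theorem span_X_image_pow (s : Set σ) (n : ℕ) :
    Ideal.span (X '' s : Set (MvPolynomial σ R)) ^ n =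
      Ideal.span ((monomial · (1 : R)) '' {x | x.degree = n ∧ ↑x.support ⊆ s}) := by
  rw [Ideal.span, Submodule.span_pow, Finsupp.image_pow_eq_finsuppProd_image]
  simp [monomial_eq]

end MonomialSpan

section Slice

variable {σ R : Type*} [CommSemiring R] (J : Ideal (MvPolynomial σ R)) (i : σ)

/-- The ideal `I_j` of the decomposition, for `z_1 = X i`. -/
noncomputable def slice (j : ℕ) : Ideal (MvPolynomial σ R) :=
  Ideal.span ((monomial · 1) '' {a | a i = 0 ∧ monomial (Finsupp.single i j + a) 1 ∈ J})

theorem monomial_mem_slice_iff [Nontrivial R] {j : ℕ} {a : σ →₀ ℕ} (ha : a i = 0) :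
    monomial a (1 : R) ∈ slice J i j ↔ monomial (Finsupp.single i j + a) (1 : R) ∈ J := by
  rw [slice, monomial_mem_span_monomial_iff]
  exact ⟨fun ⟨_, ⟨_, hs⟩, hsa⟩ => monomial_mem_of_le (add_le_add le_rfl hsa) hs,
    fun h => ⟨a, ⟨ha, h⟩, le_rfl⟩⟩

theorem slice_mono : Monotone (slice J i) := fun _ _ hjk =>
  Ideal.span_mono <| Set.image_mono fun _ ⟨ha, haJ⟩ =>
    ⟨ha, monomial_mem_of_le (add_le_add (Finsupp.single_mono hjk) le_rfl) haJ⟩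

theorem slice_eq_top_iff [Nontrivial R] {j : ℕ} : slice J i j = ⊤ ↔ X i ^ j ∈ J := by
  rw [Ideal.eq_top_iff_one, ← C_1, ← monomial_zero', monomial_mem_slice_iff J i rfl, add_zero,
    X_pow_eq_monomial]

theorem span_X_pow_mul_slice_le (j : ℕ) : Ideal.span {X i ^ j} * slice J i j ≤ J := by
  rw [slice, X_pow_eq_monomial, span_monomial_mul_span_monomial_image, Ideal.span_le]
  rintro _ ⟨_, ⟨a, ⟨_, ha⟩, rfl⟩, rfl⟩
  exact ha

theorem X_pow_mul_mem_span_X_pow_mul {I : Ideal (MvPolynomial σ R)} {j : ℕ} {p : MvPolynomial σ R}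
    (hp : p ∈ I) : X i ^ j * p ∈ Ideal.span {X i ^ j} * I :=
  Ideal.mul_mem_mul (Ideal.mem_span_singleton_self _) hp

theorem monomial_mem_span_X_pow_mul_slice [Nontrivial R] {m : σ →₀ ℕ}
    (hm : monomial m (1 : R) ∈ J) :
    monomial m (1 : R) ∈ Ideal.span {X i ^ m i} * slice J i (m i) := by
  have hsplit := Finsupp.single_add_erase i m
  have herase : monomial (m.erase i) (1 : R) ∈ slice J i (m i) := by
    rwa [monomial_mem_slice_iff J i (Finsupp.erase_same ..), hsplit]
  have hmul : monomial m (1 : R) = X i ^ m i * monomial (m.erase i) 1 := by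
    rw [X_pow_eq_monomial, monomial_mul, one_mul, hsplit]
  rw [hmul]
  exact X_pow_mul_mem_span_X_pow_mul i herase

end Slice

section MonomialIdeal

variable {K : Type} [Field K] {c : ℕ} {J : Ideal (MvPolynomial (Fin c) K)}

theorem IsMonomialIdeal.eq_sum_span_X_pow_mul_slice (hJ : IsMonomialIdeal J) (i : Fin c)
    {n : ℕ} (hn : X i ^ n ∈ J) :
    J = ∑ j ∈ Finset.range (n + 1), Ideal.span {X i ^ j} * slice J i j := by
  refine le_antisymm (fun p hp => mem_of_forall_monomial_mem fun m hm => ?_) ?_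
  · rcases le_or_gt (m i) n with hmn | hnm
    · exact mem_sum_of_mem (Finset.mem_range_succ_iff.2 hmn)
        (monomial_mem_span_X_pow_mul_slice J i (hJ p hp m hm))
    · have hsplit : monomial m (1 : K) = X i ^ n * monomial (m - Finsupp.single i n) 1 := by
        rw [X_pow_eq_monomial, monomial_mul, one_mul,
          add_tsub_cancel_of_le (Finsupp.single_le_iff.2 hnm.le)]
      rw [hsplit]
      refine mem_sum_of_mem (Finset.self_mem_range_succ n) (X_pow_mul_mem_span_X_pow_mul i ?_)
      simp [(slice_eq_top_iff J i).2 hn]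
  · rw [Ideal.sum_eq_sup]
    exact Finset.sup_le fun j _ => span_X_pow_mul_slice_le J i j

theorem isDecompositionOf_slice (hc : 1 ≤ c) (hJ : IsMonomialIdeal J) {α : ℕ}
    (hα : X ⟨0, hc⟩ ^ α ∈ J) (hmin : ∀ j < α, X ⟨0, hc⟩ ^ j ∉ J) :
    IsDecompositionOf hc J α (slice J ⟨0, hc⟩) :=
  ⟨fun j _ => slice_mono J _ j.le_succ, (slice_eq_top_iff J _).2 hα,
    fun h => (slice_eq_top_iff J _).not.2 (hmin _ (by omega)),
    fun j _ => ⟨_, fun _ ha i hi => (Fin.ext hi : i = ⟨0, hc⟩) ▸ ha.1, rfl⟩,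
    hJ.eq_sum_span_X_pow_mul_slice _ hα⟩

end MonomialIdeal

section Decomposition

variable {K : Type} [Field K] {c : ℕ} {hc : 1 ≤ c} {J : Ideal (MvPolynomial (Fin c) K)} {α : ℕ}
  {I : ℕ → Ideal (MvPolynomial (Fin c) K)}

namespace IsDecompositionOf

theorem X_pow_mul_mem (hI : IsDecompositionOf hc J α I) {j : ℕ} (hj : j ≤ α)
    {p : MvPolynomial (Fin c) K} (hp : p ∈ I j) : X ⟨0, hc⟩ ^ j * p ∈ J := by
  obtain ⟨-, -, -, -, hsum⟩ := hI
  rw [hsum]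
  exact mem_sum_of_mem (Finset.mem_range_succ_iff.2 hj) (X_pow_mul_mem_span_X_pow_mul _ hp)

theorem mono (hI : IsDecompositionOf hc J α I) {k j : ℕ} (hkj : k ≤ j) (hj : j ≤ α) :
    I k ≤ I j := by
  induction j, hkj using Nat.le_induction with
  | base => exact le_rfl
  | succ j _ ih => exact (ih (by omega)).trans (hI.1 j (by omega))

theorem exists_eq_span_monomial (hI : IsDecompositionOf hc J α I) (k : ℕ) :
    ∃ S : Set (Fin c →₀ ℕ), (∀ s ∈ S, s ⟨0, hc⟩ = 0) ∧
      (k ≤ α → I k = Ideal.span ((monomial · (1 : K)) '' S)) := by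
  obtain ⟨-, htop, -, hgen, -⟩ := hI
  rcases lt_or_ge k α with hk | hk
  · obtain ⟨S, hS0, hS⟩ := hgen k hk
    exact ⟨S, fun s hs => hS0 s hs _ rfl, fun _ => hS⟩
  · refine ⟨{0}, by simp, fun hk' => ?_⟩
    rw [le_antisymm hk' hk, htop, Set.image_singleton, monomial_zero', C_1,
      Ideal.span_singleton_one]

theorem monomial_mem_iff (hI : IsDecompositionOf hc J α I) {j : ℕ} (hj : j < α)
    {a : Fin c →₀ ℕ} (ha : a ⟨0, hc⟩ = 0) :
    monomial a (1 : K) ∈ I j ↔ monomial (Finsupp.single ⟨0, hc⟩ j + a) (1 : K) ∈ J := by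
  refine ⟨fun h => ?_, fun h => ?_⟩
  · simpa [X_pow_eq_monomial, monomial_mul] using hI.X_pow_mul_mem hj.le h
  have ⟨_, _, _, _, hsum⟩ := hI
  choose S hS0 hS using hI.exists_eq_span_monomial
  have hJ : J = Ideal.span ((monomial · (1 : K)) ''
      ⋃ k ∈ Finset.range (α + 1), (Finsupp.single ⟨0, hc⟩ k + ·) '' S k) := by
    rw [hsum, ← sum_span_monomial_image]
    refine Finset.sum_congr rfl fun k hk => ?_
    rw [hS k (Finset.mem_range_succ_iff.1 hk), X_pow_eq_monomial,
      span_monomial_mul_span_monomial_image]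
  rw [hJ, monomial_mem_span_monomial_iff] at h
  obtain ⟨_, hmem, hle⟩ := h
  simp only [Set.mem_iUnion, Set.mem_image, Finset.mem_range] at hmem
  obtain ⟨k, hk, s, hs, rfl⟩ := hmem
  obtain ⟨hkj, hsa⟩ := (single_add_le_single_add_iff (hS0 k s hs) ha).1 hle
  refine hI.mono hkj hj.le ?_
  rw [hS k (by omega), monomial_mem_span_monomial_iff]
  exact ⟨s, hs, hsa⟩

theorem eq_slice (hI : IsDecompositionOf hc J α I) {j : ℕ} (hj : j ≤ α) :
    I j = slice J ⟨0, hc⟩ j := by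
  have ⟨_, htop, _, hgen, _⟩ := hI
  rcases hj.lt_or_eq with hj | rfl
  · obtain ⟨S, hS0, hS⟩ := hgen j hj
    apply le_antisymm
    · rw [hS, Ideal.span_le]
      rintro _ ⟨s, hs, rfl⟩
      have hs0 := hS0 s hs ⟨0, hc⟩ rfl
      rw [SetLike.mem_coe, monomial_mem_slice_iff _ _ hs0, ← hI.monomial_mem_iff hj hs0, hS]
      exact Ideal.subset_span ⟨s, hs, rfl⟩
    · rw [slice, Ideal.span_le]
      rintro _ ⟨a, ⟨ha0, haJ⟩, rfl⟩
      exact (hI.monomial_mem_iff hj ha0).2 haJ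
  · rw [htop, eq_comm, slice_eq_top_iff]
    simpa using hI.X_pow_mul_mem (p := 1) le_rfl (htop ▸ Submodule.mem_top)

end IsDecompositionOf

end Decomposition

section Lex

variable {c : ℕ}

theorem lexLT_of_lt_apply_zero (hc : 1 ≤ c) {a b : Fin c →₀ ℕ} (h : b ⟨0, hc⟩ < a ⟨0, hc⟩) :
    lexLT b a :=
  ⟨⟨0, hc⟩, h, fun _ hj => (Nat.not_lt_zero _ hj).elim⟩

theorem lexLT_add_left {a b : Fin c →₀ ℕ} (h : lexLT b a) (w : Fin c →₀ ℕ) :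
    lexLT (w + b) (w + a) := by
  obtain ⟨i, hlt, heq⟩ := h
  exact ⟨i, by simpa using hlt, fun j hj => by simp [heq j hj]⟩

variable {K : Type} [Field K] {J : Ideal (MvPolynomial (Fin c) K)}

namespace IsLexSegmentIdeal

theorem X_pow_degree_mem (hc : 1 ≤ c) (hJ : IsLexSegmentIdeal J) {a : Fin c →₀ ℕ}
    (ha : monomial a (1 : K) ∈ J) : X ⟨0, hc⟩ ^ a.degree ∈ J := by
  rw [X_pow_eq_monomial]
  rcases (Finsupp.le_degree ⟨0, hc⟩ a).lt_or_eq with hlt | heq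
  · exact hJ.2 _ a (Finsupp.degree_single _ _) (lexLT_of_lt_apply_zero hc (by simpa using hlt)) ha
  obtain ⟨r, hr⟩ := le_iff_exists_add.1 (Finsupp.single_le_iff.2 heq.ge)
  have hdeg := congrArg Finsupp.degree hr
  rw [map_add, Finsupp.degree_single] at hdeg
  rwa [hr, (Finsupp.degree_eq_zero_iff r).1 (by omega), add_zero] at ha

theorem single_succ_add_mem (hc : 1 ≤ c) (hJ : IsLexSegmentIdeal J) {v : Fin c}
    (hv : v ≠ ⟨0, hc⟩) {j : ℕ} {s a : Fin c →₀ ℕ} (hs0 : s ⟨0, hc⟩ = 0)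
    (hs : monomial (Finsupp.single ⟨0, hc⟩ j + s) (1 : K) ∈ J)
    (hdeg : s.degree ≤ a.degree + 1) :
    monomial (Finsupp.single ⟨0, hc⟩ (j + 1) + a) (1 : K) ∈ J := by
  have hpad : monomial (Finsupp.single v (a.degree + 1 - s.degree) +
      (Finsupp.single ⟨0, hc⟩ j + s)) (1 : K) ∈ J := monomial_mem_of_le le_add_self hs
  refine hJ.2 _ _ ?_ (lexLT_of_lt_apply_zero hc ?_) hpad
  · simp only [map_add, Finsupp.degree_single]
    omega
  · simp only [Finsupp.add_apply, Finsupp.single_eq_same, Finsupp.single_eq_of_ne' hv, hs0]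
    omega

theorem add_one_lt_of_isHomogeneous (hc : 1 ≤ c) (hJ : IsLexSegmentIdeal J) {j : ℕ}
    (hj : X ⟨0, hc⟩ ^ j ∉ J) {e d : ℕ} {p q : MvPolynomial (Fin c) K} (hp : p.IsHomogeneous e)
    (hp0 : ∀ a ∈ p.support, a ⟨0, hc⟩ = 0) (hpI : p ∉ slice J ⟨0, hc⟩ (j + 1))
    (hq : q.IsHomogeneous d) (hq0 : q ≠ 0) (hqI : q ∈ slice J ⟨0, hc⟩ j) : e + 1 < d := by
  obtain ⟨a, hap, ha⟩ : ∃ a ∈ p.support, monomial a (1 : K) ∉ slice J ⟨0, hc⟩ (j + 1) := by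
    by_contra! h
    exact hpI (mem_of_forall_monomial_mem h)
  obtain ⟨b, hb⟩ := support_nonempty.2 hq0
  rw [slice, mem_ideal_span_monomial_image] at hqI
  obtain ⟨s, ⟨hs0, hsJ⟩, hsb⟩ := hqI b hb
  rw [← hp.degree_eq_of_mem_support hap, ← hq.degree_eq_of_mem_support hb]
  by_contra! hdeg
  have hsdeg : s.degree ≤ a.degree + 1 := (Finsupp.degree_mono hsb).trans hdeg
  by_cases hv : ∀ v : Fin c, v = ⟨0, hc⟩
  · have hs : s = 0 := Finsupp.ext fun i => (hv i) ▸ hs0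
    rw [hs, add_zero, ← X_pow_eq_monomial] at hsJ
    exact hj hsJ
  · obtain ⟨v, hv⟩ := not_forall.1 hv
    exact ha ((monomial_mem_slice_iff _ _ (hp0 a hap)).2
      (hJ.single_succ_add_mem hc hv hs0 hsJ hsdeg))

theorem monomial_mem_slice_of_lexLT (hJ : IsLexSegmentIdeal J) (i : Fin c) {j : ℕ}
    {a b : Fin c →₀ ℕ} (ha : a i = 0) (hb : b i = 0) (hdeg : a.degree = b.degree)
    (hlex : lexLT b a) (hmem : monomial b (1 : K) ∈ slice J i j) :
    monomial a (1 : K) ∈ slice J i j := by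
  rw [monomial_mem_slice_iff J i ha]
  rw [monomial_mem_slice_iff J i hb] at hmem
  exact hJ.2 _ _ (by simp only [map_add, hdeg]) (lexLT_add_left hlex _) hmem

end IsLexSegmentIdeal

end Lex

section MBar

variable {K : Type} [Field K] {c : ℕ} {J : Ideal (MvPolynomial (Fin c) K)}

theorem mBar_pow_eq (n : ℕ) :
    mBar K c ^ n = Ideal.span ((monomial · (1 : K)) ''
      {x | x.degree = n ∧ ↑x.support ⊆ {i : Fin c | i.1 ≠ 0}}) := by
  rw [← span_X_image_pow, mBar]
  congr 2
  ext q
  simp [eq_comm]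

theorem slice_le_mBar_pow (hc : 1 ≤ c) {α : ℕ}
    (hlow : ∀ a : Fin c →₀ ℕ, monomial a (1 : K) ∈ J → α ≤ a.degree) (j : ℕ) :
    slice J ⟨0, hc⟩ j ≤ mBar K c ^ (α - j) := by
  rw [slice, Ideal.span_le]
  rintro _ ⟨a, ⟨ha0, haJ⟩, rfl⟩
  have hdeg := hlow _ haJ
  rw [map_add, Finsupp.degree_single] at hdeg
  obtain ⟨x, hxa, hx⟩ := Finsupp.exists_le_degree_eq a (α - j) (by omega)
  rw [SetLike.mem_coe, mBar_pow_eq, monomial_mem_span_monomial_iff]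
  refine ⟨x, ⟨hx, fun i hi h0 => ?_⟩, hxa⟩
  obtain rfl : i = ⟨0, hc⟩ := Fin.ext h0
  exact Finsupp.mem_support_iff.1 hi (by simpa [ha0] using hxa ⟨0, hc⟩)

theorem mBar_pow_le_slice (hc : 1 ≤ c) {t : ℕ}
    (hbig : ∀ a : Fin c →₀ ℕ, t + 1 ≤ a.degree → monomial a (1 : K) ∈ J) (j : ℕ) :
    mBar K c ^ (t + 1 - j) ≤ slice J ⟨0, hc⟩ j := by
  rw [mBar_pow_eq, Ideal.span_le]
  rintro _ ⟨x, ⟨hx, hxs⟩, rfl⟩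
  have hx0 : x ⟨0, hc⟩ = 0 := Finsupp.notMem_support_iff.1 fun h => hxs h rfl
  exact (monomial_mem_slice_iff J _ hx0).2 (hbig _ (by rw [map_add, Finsupp.degree_single]; omega))

end MBar

theorem lexseg_decomposition_general {K : Type} [Field K] {c : ℕ} (hc : 1 ≤ c)
    (J : Ideal (MvPolynomial (Fin c) K))
    (hJ : IsLexSegmentIdeal J)
    (α : ℕ)
    (hα : (∃ p ∈ J, p ≠ 0 ∧ p.IsHomogeneous α) ∧
      ∀ β : ℕ, (∃ p ∈ J, p ≠ 0 ∧ p.IsHomogeneous β) → α ≤ β)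
    (t : ℕ)
    (ht : (∃ p : MvPolynomial (Fin c) K, p.IsHomogeneous t ∧ p ∉ J) ∧
      ∀ t' : ℕ, (∃ p : MvPolynomial (Fin c) K, p.IsHomogeneous t' ∧ p ∉ J) → t' ≤ t) :
    ∃ I : ℕ → Ideal (MvPolynomial (Fin c) K),
      IsDecompositionOf hc J α I ∧
      -- `(z_2,…,z_c)^{t+1−j} ⊆ I_j ⊆ (z_2,…,z_c)^{α−j}` for `0 ≤ j ≤ α−1`
      (∀ j, j < α → (mBar K c) ^ (t + 1 - j) ≤ I j ∧ I j ≤ (mBar K c) ^ (α - j)) ∧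
      -- each `I_j ∩ T̄` is an Artinian lex-segment ideal of `T̄`
      (∀ j, j < α →
        (∀ a b : Fin c →₀ ℕ, (∀ i : Fin c, i.1 = 0 → a i = 0) →
          (∀ i : Fin c, i.1 = 0 → b i = 0) → a.degree = b.degree → lexLT b a →
          (monomial b (1 : K)) ∈ I j → (monomial a (1 : K)) ∈ I j) ∧
        (∃ N : ℕ, ∀ a : Fin c →₀ ℕ, (∀ i : Fin c, i.1 = 0 → a i = 0) →
          N ≤ a.degree → (monomial a (1 : K)) ∈ I j)) ∧
      -- the initial-degree inequality `a(I_j) > 1 + reg…(I_{j+1})`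
      (∀ j, j + 2 ≤ α → ∀ e : ℕ,
        (∃ p : MvPolynomial (Fin c) K, p ≠ 0 ∧ p.IsHomogeneous e ∧
          (∀ a ∈ p.support, ∀ i : Fin c, i.1 = 0 → a i = 0) ∧ p ∉ I (j + 1)) →
        ∀ d : ℕ, (∃ q ∈ I j, q ≠ 0 ∧ q.IsHomogeneous d) → e + 1 < d) ∧
      -- uniqueness
      (∀ I' : ℕ → Ideal (MvPolynomial (Fin c) K),
        IsDecompositionOf hc J α I' → ∀ j ≤ α, I' j = I j) := by
  have hbig (a : Fin c →₀ ℕ) : t + 1 ≤ a.degree → monomial a (1 : K) ∈ J :=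
    monomial_mem_of_lt_degree ht.2
  have hlow (a : Fin c →₀ ℕ) : monomial a (1 : K) ∈ J → α ≤ a.degree :=
    le_degree_of_monomial_mem hα.2
  have hmin : ∀ j < α, X ⟨0, hc⟩ ^ j ∉ J := fun j hj h => by
    have := hlow _ (X_pow_eq_monomial (R := K) ▸ h)
    rw [Finsupp.degree_single] at this
    omega
  have hXα : X ⟨0, hc⟩ ^ α ∈ J := by
    obtain ⟨p, hpJ, hp0, hp⟩ := hα.1
    obtain ⟨m, hm⟩ := support_nonempty.2 hp0
    rw [← hp.degree_eq_of_mem_support hm]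
    exact hJ.X_pow_degree_mem hc (hJ.1 p hpJ m hm)
  refine ⟨slice J ⟨0, hc⟩, isDecompositionOf_slice hc hJ.1 hXα hmin,
    fun j _ => ⟨mBar_pow_le_slice hc hbig j, slice_le_mBar_pow hc hlow j⟩,
    fun j _ => ⟨fun a b ha hb => hJ.monomial_mem_slice_of_lexLT _ (ha _ rfl) (hb _ rfl),
      t + 1, fun a ha hdeg => (monomial_mem_slice_iff J _ (ha _ rfl)).2
        (hbig _ (by rw [map_add, Finsupp.degree_single]; omega))⟩,
    ?_, fun I' hI' j hj => hI'.eq_slice hj⟩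
  rintro j hj e ⟨p, -, hp, hpT, hpI⟩ d ⟨q, hqI, hq0, hq⟩
  exact hJ.add_one_lt_of_isHomogeneous hc (hmin j (by omega)) hp (fun a ha => hpT a ha _ rfl)
    hpI hq hq0 hqI

/-- Lemma 5.3:  let `J` be an Artinian lex-segment ideal in `T = K[z_1,…,z_c]` of
initial degree `α`, and let `t` be the largest integer with `[T/J]_t ≠ 0`.  Then there
are uniquely determined ideals `I_0 ⊆ I_1 ⊆ ⋯ ⊆ I_{α−1} ⊊ I_α = T`, each `I_j` (for
`j < α`) being the extension to `T` of a monomial ideal of `T̄ = K[z_2,…,z_c]`, with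
`J = Σ_{j=0}^{α} z_1^j·I_j`; moreover `(z_2,…,z_c)^{t+1−j} ⊆ I_j ⊆ (z_2,…,z_c)^{α−j}`
for `0 ≤ j ≤ α−1`, each `I_j ∩ T̄` is an Artinian lex-segment ideal of `T̄`, and for
`0 ≤ j ≤ α−2` the initial degree of `I_j` is strictly greater than
`1 + max{i : [T̄/(I_{j+1} ∩ T̄)]_i ≠ 0}`. -/
theorem lexseg_decomposition {K : Type} [Field K] {c : ℕ} (hc : 1 ≤ c)
    (J : Ideal (MvPolynomial (Fin c) K))
    (hJ : IsLexSegmentIdeal J)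
    (hArt : Module.Finite K (MvPolynomial (Fin c) K ⧸ J))
    (α : ℕ)
    (hα : (∃ p ∈ J, p ≠ 0 ∧ p.IsHomogeneous α) ∧
      ∀ β : ℕ, (∃ p ∈ J, p ≠ 0 ∧ p.IsHomogeneous β) → α ≤ β)
    (t : ℕ)
    (ht : (∃ p : MvPolynomial (Fin c) K, p.IsHomogeneous t ∧ p ∉ J) ∧
      ∀ t' : ℕ, (∃ p : MvPolynomial (Fin c) K, p.IsHomogeneous t' ∧ p ∉ J) → t' ≤ t) :
    ∃ I : ℕ → Ideal (MvPolynomial (Fin c) K),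
      IsDecompositionOf hc J α I ∧
      -- `(z_2,…,z_c)^{t+1−j} ⊆ I_j ⊆ (z_2,…,z_c)^{α−j}` for `0 ≤ j ≤ α−1`
      (∀ j, j < α → (mBar K c) ^ (t + 1 - j) ≤ I j ∧ I j ≤ (mBar K c) ^ (α - j)) ∧
      -- each `I_j ∩ T̄` is an Artinian lex-segment ideal of `T̄`
      (∀ j, j < α →
        (∀ a b : Fin c →₀ ℕ, (∀ i : Fin c, i.1 = 0 → a i = 0) →
          (∀ i : Fin c, i.1 = 0 → b i = 0) → a.degree = b.degree → lexLT b a →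
          (monomial b (1 : K)) ∈ I j → (monomial a (1 : K)) ∈ I j) ∧
        (∃ N : ℕ, ∀ a : Fin c →₀ ℕ, (∀ i : Fin c, i.1 = 0 → a i = 0) →
          N ≤ a.degree → (monomial a (1 : K)) ∈ I j)) ∧
      -- the initial-degree inequality `a(I_j) > 1 + reg…(I_{j+1})`
      (∀ j, j + 2 ≤ α → ∀ e : ℕ,
        (∃ p : MvPolynomial (Fin c) K, p ≠ 0 ∧ p.IsHomogeneous e ∧
          (∀ a ∈ p.support, ∀ i : Fin c, i.1 = 0 → a i = 0) ∧ p ∉ I (j + 1)) →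
        ∀ d : ℕ, (∃ q ∈ I j, q ≠ 0 ∧ q.IsHomogeneous d) → e + 1 < d) ∧
      -- uniqueness
      (∀ I' : ℕ → Ideal (MvPolynomial (Fin c) K),
        IsDecompositionOf hc J α I' → ∀ j ≤ α, I' j = I j) :=
  lexseg_decomposition_general hc J hJ α hα t ht

end GorensteinSI
end

section
/- Let h = (h_0,…,h_t) be an O-sequence with h_1 ≤ c, and let (h^0,…,h^{α−1}) be its decomposition, where α is the initial degree of the lex-segment ideal of T = K[z_1,…,z_c] with Hilbert function h. Then LOIM(h) = ⋃_{j=0}^{α−1} y_c^j · LOIM(h^j), where LOIM(h^j) is taken inside K[y_1,…,y_{c−1}]. -/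
open MvPolynomial

namespace GorensteinSI

/-- `b ≤ₗ a` in the lexicographic order. -/
def lexLE {c : ℕ} (b a : Fin c →₀ ℕ) : Prop := b = a ∨ lexLT b a

/-- `b <ᵣ a` in the reverse lexicographic order: the last nonzero coordinate of the
difference is negative. -/
def revLexLT {c : ℕ} (b a : Fin c →₀ ℕ) : Prop :=
  ∃ i : Fin c, b i < a i ∧ ∀ j : Fin c, i < j → b j = a j

/-- `b ≤ᵣ a` in the reverse lexicographic order. -/
def revLexLE {c : ℕ} (b a : Fin c →₀ ℕ) : Prop := b = a ∨ revLexLT b a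

/-- An ideal of a polynomial ring is homogeneous if it contains all homogeneous
components of each of its elements. -/
def IsStdHomogeneous {K : Type} [Field K] {N : ℕ}
    (I : Ideal (MvPolynomial (Fin N) K)) : Prop :=
  ∀ p ∈ I, ∀ i : ℕ, MvPolynomial.homogeneousComponent i p ∈ I

/-- The dimension over `K` of the degree `t` graded piece of the quotient. -/
noncomputable def hilbOf {K : Type} [Field K] {N : ℕ}
    (I : Ideal (MvPolynomial (Fin N) K)) (t : ℕ) : ℕ :=
  Module.finrank K
    ((MvPolynomial.homogeneousSubmodule (Fin N) K t) ⧸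
      Submodule.comap (MvPolynomial.homogeneousSubmodule (Fin N) K t).subtype
        (Submodule.restrictScalars K I))

/-- An O-sequence: a sequence beginning with `1` which is the Hilbert function of a
standard graded `K`-algebra. -/
def OSequence (K : Type) [Field K] (h : ℕ → ℕ) : Prop :=
  h 0 = 1 ∧ ∃ (N : ℕ) (I : Ideal (MvPolynomial (Fin N) K)),
    IsStdHomogeneous I ∧ ∀ i, h i = hilbOf I i

/-- `LOIM(h)` in `c` variables: the union over `i` of the sets of the `h i` smallest
degree-`i` monomials in the reverse lexicographic order. -/
def LOIMset (c : ℕ) (h : ℕ → ℕ) : Set (Fin c →₀ ℕ) :=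
  {a | Set.ncard {b : Fin c →₀ ℕ | b.degree = a.degree ∧ revLexLE b a} ≤ h a.degree}

/-- `LOIM(h′)` taken inside `K[y_1,…,y_{c−1}]`, realized as the set of exponent vectors
in `c` variables whose last coordinate (the exponent of `y_c`) vanishes. -/
def LOIMsetBar (c : ℕ) (h' : ℕ → ℕ) : Set (Fin c →₀ ℕ) :=
  {a | (∀ hc : 0 < c, a ⟨c - 1, by omega⟩ = 0) ∧
    Set.ncard {b : Fin c →₀ ℕ | (∀ hc : 0 < c, b ⟨c - 1, by omega⟩ = 0) ∧
      b.degree = a.degree ∧ revLexLE b a} ≤ h' a.degree}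

/-- The set of (exponent vectors of) monomials of the lex-segment ideal `J` of
`T = K[z_1,…,z_c]` with Hilbert function `h`:  a monomial of degree `i` lies in `J`
exactly when it is not among the `h i` smallest degree-`i` monomials in the
lexicographic order. -/
def lexSegSet (c : ℕ) (h : ℕ → ℕ) : Set (Fin c →₀ ℕ) :=
  {a | h a.degree < Set.ncard {b : Fin c →₀ ℕ | b.degree = a.degree ∧ lexLE b a}}

/-- The initial degree `α` of the lex-segment ideal associated to `h` in `c`
variables. -/
noncomputable def alphaOf (c : ℕ) (h : ℕ → ℕ) : ℕ :=
  sInf {i : ℕ | h i < Nat.choose (c - 1 + i) i}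

/-- The `j`-th entry `h^j` of the decomposition of `h`:  writing
`J = Σ_j z_1^j·I_j` for the decomposition of the lex-segment ideal `J` associated to
`h`, `h^j i` is the number of degree-`i` monomials `m` in `z_2,…,z_c` with
`m ∉ I_j`, i.e. with `z_1^j·m ∉ J`;  this is the Hilbert function of
`T̄/(I_j ∩ T̄)`. -/
noncomputable def hdecomp (c : ℕ) (h : ℕ → ℕ) (j : ℕ) : ℕ → ℕ := fun i =>
  Set.ncard {a : Fin c →₀ ℕ |
    (∀ hc : 0 < c, a ⟨0, hc⟩ = 0) ∧ a.degree = i ∧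
      (∀ hc : 0 < c, a + Finsupp.single (⟨0, hc⟩ : Fin c) j ∉ lexSegSet c h)}

/-!
Reversing the variables turns the reverse lexicographic order into the lexicographic one, so
`LOIM(h)` is the reversal of the set of monomials outside the lex-segment ideal `J`, and
`y_c^j·m ∈ LOIM(h)` exactly when `z_1^j·m̃ ∉ J`, `m̃` the reversal of `m`. In a fixed degree the
`z_1`-free monomials `m̃` with `z_1^j·m̃ ∉ J` form a lex initial segment (multiplication by
`z_1^j` preserves lex), and `h^j` counts them; this identifies the `y_c^j`-slice of `LOIM(h)`
with `y_c^j·LOIM(h^j)`.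

It remains to see that only `j < α` occur. Since `h_1 ≤ c`, `h` is the Hilbert function of a
quotient of `T = K[z_1,…,z_c]`, and `h_α < dim T_α` provides a nonzero form of degree `α` in its
ideal; its multiples give `h_d ≤ dim T_d - dim T_{d-α}`, the number of degree `d` monomials with
`z_1`-exponent `< α`. A monomial with `z_1`-exponent `≥ α` lies lex-above all of these, hence in
`J`.
-/

section Combinatorics

variable {c n : ℕ}

theorem lexLE_iff {b a : Fin c →₀ ℕ} : lexLE b a ↔ toLex b ≤ toLex a := by
  have : lexLT b a ↔ toLex b < toLex a :=
    ⟨fun ⟨i, hlt, heq⟩ => ⟨i, heq, hlt⟩, fun ⟨i, heq, hlt⟩ => ⟨i, hlt, heq⟩⟩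
  rw [lexLE, this, le_iff_eq_or_lt, toLex_inj]

theorem lexLE_refl (a : Fin c →₀ ℕ) : lexLE a a := Or.inl rfl

theorem lexLE_total (a b : Fin c →₀ ℕ) : lexLE a b ∨ lexLE b a := by
  simp only [lexLE_iff]
  exact le_total _ _

theorem lexLE.trans {a b d : Fin c →₀ ℕ} (hab : lexLE a b) (hbd : lexLE b d) : lexLE a d :=
  lexLE_iff.2 ((lexLE_iff.1 hab).trans (lexLE_iff.1 hbd))

theorem lexLE.add_right {a b : Fin c →₀ ℕ} (hab : lexLE a b) (k : Fin c →₀ ℕ) :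
    lexLE (a + k) (b + k) :=
  lexLE_iff.2 (add_le_add_left (lexLE_iff.1 hab) (toLex k))

def reverse : (Fin c →₀ ℕ) ≃+ (Fin c →₀ ℕ) := Finsupp.domCongr Fin.revPerm

@[simp]
theorem reverse_apply (b : Fin c →₀ ℕ) (i : Fin c) : reverse b i = b i.rev := by
  simp [reverse, Finsupp.equivMapDomain_apply, Fin.revPerm_symm]

@[simp]
theorem reverse_reverse (b : Fin c →₀ ℕ) : reverse (reverse b) = b := by
  ext i; simp

@[simp]
theorem degree_reverse (b : Fin c →₀ ℕ) : (reverse b).degree = b.degree := by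
  simp [reverse, Finsupp.equivMapDomain_eq_mapDomain]

@[simp]
theorem reverse_single (i : Fin c) (k : ℕ) :
    reverse (Finsupp.single i k) = Finsupp.single i.rev k := by
  simp [reverse, Fin.revPerm_apply]

theorem revLexLE_iff {b a : Fin c →₀ ℕ} : revLexLE b a ↔ lexLE (reverse b) (reverse a) := by
  have : revLexLT b a ↔ lexLT (reverse b) (reverse a) := by
    refine ⟨fun ⟨i, hlt, heq⟩ => ⟨i.rev, by simpa using hlt, fun j hj => ?_⟩,
      fun ⟨i, hlt, heq⟩ => ⟨i.rev, by simpa using hlt, fun j hj => ?_⟩⟩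
    · simpa using heq j.rev (Fin.lt_rev_iff.1 hj)
    · simpa using heq j.rev (Fin.rev_lt_iff.2 hj)
  rw [revLexLE, lexLE, this, reverse.injective.eq_iff]

theorem ncard_preimage_reverse (S : Set (Fin c →₀ ℕ)) : (reverse ⁻¹' S).ncard = S.ncard :=
  Set.ncard_preimage_of_injective_subset_range reverse.injective
    (by simp [reverse.surjective.range_eq])

theorem mem_iff_ncard_le_of_lowerClosed {α : Type*} {r : α → α → Prop}
    (hr : ∀ a b, r a b ∨ r b a) {T G : Set α} (hT : T.Finite) (hGT : G ⊆ T)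
    (hG : ∀ g ∈ G, ∀ y ∈ T, r y g → y ∈ G) {m : α} (hm : m ∈ T) :
    m ∈ G ↔ {y ∈ T | r y m}.ncard ≤ G.ncard := by
  refine ⟨fun hmG => Set.ncard_le_ncard (fun y hy => hG m hmG y hy.1 hy.2) (hT.subset hGT),
    fun hle => ?_⟩
  by_contra hmG
  have hsub : G ⊆ {y ∈ T | r y m} \ {m} := fun g hg =>
    ⟨⟨hGT hg, (hr g m).resolve_right fun hmg => hmG (hG g hg m hm hmg)⟩,
      fun hgm => hmG (hgm ▸ hg)⟩
  have hfin : {y ∈ T | r y m}.Finite := hT.subset fun y hy => hy.1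
  have := (Set.ncard_le_ncard hsub hfin.sdiff).trans_lt <|
    Set.ncard_sdiff_singleton_lt_of_mem ⟨hm, (hr m m).elim id id⟩ hfin
  omega

theorem notMem_lexSegSet_of_lexLE {h : ℕ → ℕ} {a b : Fin c →₀ ℕ} (hab : lexLE a b)
    (hd : a.degree = b.degree) (hb : b ∉ lexSegSet c h) : a ∉ lexSegSet c h := by
  simp only [lexSegSet, Set.mem_ofPred_eq, not_lt, hd] at hb ⊢
  refine le_trans (Set.ncard_le_ncard ?_ ((Finsupp.finite_of_degree_eq b.degree).subset
    fun _ hb' => hb'.1)) hb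
  exact fun b' ⟨hd', hle⟩ => ⟨hd', hle.trans hab⟩

theorem mem_LOIMset_iff {h : ℕ → ℕ} {x : Fin c →₀ ℕ} :
    x ∈ LOIMset c h ↔ reverse x ∉ lexSegSet c h := by
  have : {b | b.degree = x.degree ∧ revLexLE b x} =
      reverse ⁻¹' {m | m.degree = (reverse x).degree ∧ lexLE m (reverse x)} := by
    ext b; simp [revLexLE_iff]
  simp only [LOIMset, lexSegSet, Set.mem_ofPred_eq, this, ncard_preimage_reverse,
    degree_reverse, not_lt]

theorem mem_LOIMsetBar_iff {h' : ℕ → ℕ} {b : Fin (n + 1) →₀ ℕ} :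
    b ∈ LOIMsetBar (n + 1) h' ↔ b (Fin.last n) = 0 ∧
      {m | m 0 = 0 ∧ m.degree = b.degree ∧ lexLE m (reverse b)}.ncard ≤ h' b.degree := by
  have hlast (a : Fin (n + 1) →₀ ℕ) :
      (∀ _ : 0 < n + 1, a ⟨n + 1 - 1, by omega⟩ = 0) ↔ a (Fin.last n) = 0 :=
    ⟨fun ha => ha n.succ_pos, fun ha _ => ha⟩
  rw [LOIMsetBar, Set.mem_ofPred_eq, hlast, ← ncard_preimage_reverse]
  congr! 4
  simp only [hlast]
  simp [revLexLE_iff]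

theorem hdecomp_eq_ncard (h : ℕ → ℕ) (j i : ℕ) :
    hdecomp (n + 1) h j i = {m : Fin (n + 1) →₀ ℕ | m 0 = 0 ∧ m.degree = i ∧
      m + Finsupp.single 0 j ∉ lexSegSet (n + 1) h}.ncard := by
  simp only [hdecomp, forall_prop_of_true n.succ_pos]
  rfl

theorem add_single_zero_notMem_lexSegSet_iff {h : ℕ → ℕ} {m : Fin (n + 1) →₀ ℕ} (hm : m 0 = 0)
    (j : ℕ) : m + Finsupp.single 0 j ∉ lexSegSet (n + 1) h ↔
      {m' | m' 0 = 0 ∧ m'.degree = m.degree ∧ lexLE m' m}.ncard ≤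
        hdecomp (n + 1) h j m.degree := by
  let T := {m' : Fin (n + 1) →₀ ℕ | m' 0 = 0 ∧ m'.degree = m.degree}
  have hT : T.Finite := (Finsupp.finite_of_degree_eq m.degree).subset fun _ hm' => hm'.2
  have key := mem_iff_ncard_le_of_lowerClosed lexLE_total hT
    (G := {m' | m' ∈ T ∧ m' + Finsupp.single 0 j ∉ lexSegSet (n + 1) h}) (fun _ hm' => hm'.1)
    (fun g hg y hy hyg => ⟨hy, notMem_lexSegSet_of_lexLE (hyg.add_right _)
      (by simp [hy.2, hg.1.2]) hg.2⟩) (m := m) ⟨hm, rfl⟩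
  simp only [Set.mem_ofPred_eq, hm, true_and, T] at key
  rw [key, hdecomp_eq_ncard]
  simp only [and_assoc]

theorem add_single_last_mem_LOIMset_iff {h : ℕ → ℕ} {b : Fin (n + 1) →₀ ℕ}
    (hb : b (Fin.last n) = 0) (j : ℕ) :
    b + Finsupp.single (Fin.last n) j ∈ LOIMset (n + 1) h ↔
      b ∈ LOIMsetBar (n + 1) (hdecomp (n + 1) h j) := by
  have hb' : reverse b 0 = 0 := by simpa using hb
  rw [mem_LOIMset_iff, map_add, reverse_single, Fin.rev_last,
    add_single_zero_notMem_lexSegSet_iff hb', mem_LOIMsetBar_iff, degree_reverse]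
  exact (and_iff_right hb).symm

theorem lt_of_notMem_lexSegSet {h : ℕ → ℕ} {α : ℕ}
    (hα : ∀ d, α ≤ d → h d ≤ {b : Fin (n + 1) →₀ ℕ | b.degree = d ∧ b 0 < α}.ncard)
    {y : Fin (n + 1) →₀ ℕ} (hy : y ∉ lexSegSet (n + 1) h) : y 0 < α := by
  by_contra! hge
  set A := {b : Fin (n + 1) →₀ ℕ | b.degree = y.degree ∧ b 0 < α}
  have hsub : insert y A ⊆ {b | b.degree = y.degree ∧ lexLE b y} := by
    rintro b (rfl | ⟨hbd, hb0⟩)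
    · exact ⟨rfl, lexLE_refl b⟩
    · exact ⟨hbd, Or.inr ⟨0, hb0.trans_le hge, fun j hj => absurd hj (Fin.not_lt_zero j)⟩⟩
  have hyA : y ∉ A := fun hyA => hyA.2.not_ge hge
  have hcard := Set.ncard_le_ncard hsub
    ((Finsupp.finite_of_degree_eq y.degree).subset fun _ hb => hb.1)
  rw [Set.ncard_insert_of_notMem hyA
    ((Finsupp.finite_of_degree_eq y.degree).subset fun _ hb => hb.1)] at hcard
  have hA : h y.degree ≤ A.ncard := hα y.degree (hge.trans (Finsupp.le_degree 0 y))
  exact hy (by simp only [lexSegSet, Set.mem_ofPred_eq]; omega)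

theorem LOIMset_eq_of_le_ncard {h : ℕ → ℕ} {α : ℕ}
    (hα : ∀ d, α ≤ d → h d ≤ {b : Fin (n + 1) →₀ ℕ | b.degree = d ∧ b 0 < α}.ncard) :
    LOIMset (n + 1) h = {x | ∃ j < α, ∃ b ∈ LOIMsetBar (n + 1) (hdecomp (n + 1) h j),
      x = b + Finsupp.single (Fin.last n) j} := by
  ext x
  constructor
  · intro hx
    have hb : x.erase (Fin.last n) (Fin.last n) = 0 := Finsupp.erase_same
    have hx' := Finsupp.erase_add_single (Fin.last n) x
    refine ⟨x (Fin.last n), ?_, x.erase (Fin.last n), ?_, hx'.symm⟩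
    · simpa using lt_of_notMem_lexSegSet hα (mem_LOIMset_iff.1 hx)
    · rwa [← add_single_last_mem_LOIMset_iff hb, hx']
  · rintro ⟨j, -, b, hb, rfl⟩
    exact (add_single_last_mem_LOIMset_iff (mem_LOIMsetBar_iff.1 hb).1 j).2 hb

theorem ncard_setOf_degree_eq (n d : ℕ) :
    {b : Fin (n + 1) →₀ ℕ | b.degree = d}.ncard = (n + d).choose d := by
  classical
  have : {b : Fin (n + 1) →₀ ℕ | b.degree = d} =
      (Finset.univ.finsuppAntidiag d : Finset (Fin (n + 1) →₀ ℕ)) := by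
    ext b
    simp [Finset.mem_finsuppAntidiag, Finsupp.degree_eq_sum]
  rw [this, Set.ncard_coe_finset, Finset.card_finsuppAntidiag_nat_eq_choose, Finset.card_univ,
    Fintype.card_fin, Nat.add_right_comm, Nat.add_sub_cancel]

theorem ncard_setOf_degree_eq_add {σ : Type*} [Finite σ] (i : σ) {α d : ℕ} (hαd : α ≤ d) :
    {b : σ →₀ ℕ | b.degree = d}.ncard =
      {b : σ →₀ ℕ | b.degree = d ∧ b i < α}.ncard + {b : σ →₀ ℕ | b.degree = d - α}.ncard := by
  have himage : {b : σ →₀ ℕ | b.degree = d} \ {b | b i < α} =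
      (· + Finsupp.single i α) '' {b | b.degree = d - α} := by
    ext b
    constructor
    · rintro ⟨hbd, hbi⟩
      have hle : Finsupp.single i α ≤ b := Finsupp.single_le_iff.2 (not_lt.1 hbi)
      refine ⟨b - Finsupp.single i α, ?_, tsub_add_cancel_of_le hle⟩
      have := congrArg Finsupp.degree (tsub_add_cancel_of_le hle)
      simp only [map_add, Finsupp.degree_single] at this
      simp only [Set.mem_ofPred_eq] at hbd ⊢
      omega
    · rintro ⟨m, hm, rfl⟩
      simp only [Set.mem_ofPred_eq] at hm
      simp [hm, hαd]
  rw [← Set.ncard_inter_add_ncard_sdiff_eq_ncard _ {b | b i < α}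
    (Finsupp.finite_of_degree_eq d), himage, Set.ncard_image_of_injective _ (add_left_injective _)]
  rfl

end Combinatorics

section Algebra

variable {K : Type} [Field K]

instance {σ : Type*} [Finite σ] (d : ℕ) : Module.Finite K (homogeneousSubmodule σ K d) :=
  Module.Finite.iff_fg.2 (homogeneousSubmodule_fg σ K d)

theorem finrank_homogeneousSubmodule {σ : Type*} [Finite σ] (d : ℕ) :
    Module.finrank K (homogeneousSubmodule σ K d) = {b : σ →₀ ℕ | b.degree = d}.ncard := by
  have : Finite {b : σ →₀ ℕ | b.degree = d} := (Finsupp.finite_of_degree_eq d).to_subtype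
  rw [homogeneousSubmodule_eq_finsupp_supported, ← Nat.card_coe_set_eq]
  exact Module.finrank_eq_nat_card_basis (basisRestrictSupport K _)

variable {N : ℕ} (I : Ideal (MvPolynomial (Fin N) K))

noncomputable def degreePart (d : ℕ) : Submodule K (homogeneousSubmodule (Fin N) K d) :=
  (Submodule.restrictScalars K I).comap (homogeneousSubmodule (Fin N) K d).subtype

theorem hilbOf_add_finrank_degreePart (d : ℕ) :
    hilbOf I d + Module.finrank K (degreePart I d) =
      Module.finrank K (homogeneousSubmodule (Fin N) K d) :=
  Submodule.finrank_quotient_add_finrank (degreePart I d)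

theorem finrank_le_finrank_degreePart {f : MvPolynomial (Fin N) K} {α d : ℕ} (hfI : f ∈ I)
    (hf : f.IsHomogeneous α) (hf0 : f ≠ 0) (hαd : α ≤ d) :
    Module.finrank K (homogeneousSubmodule (Fin N) K (d - α)) ≤
      Module.finrank K (degreePart I d) := by
  have hmul (q : homogeneousSubmodule (Fin N) K (d - α)) :
      f * q ∈ homogeneousSubmodule (Fin N) K d := by
    simpa [Nat.add_sub_cancel' hαd] using hf.mul q.2
  let μ : homogeneousSubmodule (Fin N) K (d - α) →ₗ[K] degreePart I d :=
    { toFun := fun q => ⟨⟨f * q, hmul q⟩, I.mul_mem_right _ hfI⟩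
      map_add' := fun q q' => by ext; simp [mul_add]
      map_smul' := fun r q => by ext; simp }
  refine LinearMap.finrank_le_finrank_of_injective (f := μ) fun q q' hqq' => ?_
  exact Subtype.ext (mul_left_cancel₀ hf0 (congrArg (fun x => (x.1.1 : MvPolynomial _ K)) hqq'))

theorem hilbOf_add_finrank_le {α d : ℕ}
    (hα : hilbOf I α < Module.finrank K (homogeneousSubmodule (Fin N) K α)) (hαd : α ≤ d) :
    hilbOf I d + Module.finrank K (homogeneousSubmodule (Fin N) K (d - α)) ≤
      Module.finrank K (homogeneousSubmodule (Fin N) K d) := by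
  have hne : degreePart I α ≠ ⊥ := fun hbot => by
    have := hilbOf_add_finrank_degreePart I α
    rw [hbot, finrank_bot] at this
    omega
  obtain ⟨f, hfI, hf0⟩ := Submodule.exists_mem_ne_zero_of_ne_bot hne
  have := finrank_le_finrank_degreePart I hfI f.2 (fun h => hf0 (Subtype.ext h)) hαd
  have := hilbOf_add_finrank_degreePart I d
  omega

end Algebra

theorem exists_sub_sum_smul_mem_of_finrank_quotient_le {K V : Type*} [Field K] [AddCommGroup V]
    [Module K V] [FiniteDimensional K V] (M : Submodule K V) {c : ℕ}
    (hc : Module.finrank K (V ⧸ M) ≤ c) :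
    ∃ L : Fin c → V, ∀ v, ∃ a : Fin c → K, v - ∑ i, a i • L i ∈ M := by
  let b := Module.finBasis K (V ⧸ M)
  let g : Fin c → V ⧸ M := fun i =>
    if hi : (i : ℕ) < Module.finrank K (V ⧸ M) then b ⟨i, hi⟩ else 0
  choose L hL using fun i => M.mkQ_surjective (g i)
  refine ⟨L, fun v => ?_⟩
  have hspan : M.mkQ v ∈ Submodule.span K (Set.range g) := by
    refine Submodule.span_mono ?_ (b.mem_span (M.mkQ v))
    rintro _ ⟨k, rfl⟩
    exact ⟨Fin.castLE hc k, by simp [g]⟩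
  obtain ⟨a, ha⟩ := (Submodule.mem_span_range_iff_exists_fun K).1 hspan
  refine ⟨a, (Submodule.Quotient.mk_eq_zero M).1 ?_⟩
  rw [← Submodule.mkQ_apply, map_sub, map_sum]
  simp only [map_smul, hL, ha, sub_self]

theorem surjective_mk_comp_aeval {R σ τ : Type*} [CommRing R] {I : Ideal (MvPolynomial τ R)}
    {L : σ → MvPolynomial τ R} (hL : ∀ i, ∃ q : MvPolynomial σ R, X i - aeval L q ∈ I) :
    Function.Surjective ((Ideal.Quotient.mkₐ R I).comp (aeval L)) := by
  intro x
  obtain ⟨p, rfl⟩ := Ideal.Quotient.mk_surjective x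
  induction p using MvPolynomial.induction_on with
  | C a => exact ⟨C a, ((Ideal.Quotient.mkₐ R I).comp (aeval L)).commutes a⟩
  | add p q hp hq =>
    obtain ⟨p', hp'⟩ := hp
    obtain ⟨q', hq'⟩ := hq
    exact ⟨p' + q', by simp_all⟩
  | mul_X p i hp =>
    obtain ⟨p', hp'⟩ := hp
    obtain ⟨q, hq⟩ := hL i
    refine ⟨p' * q, ?_⟩
    rw [map_mul, hp', map_mul, AlgHom.comp_apply, Ideal.Quotient.mkₐ_eq_mk,
      Ideal.Quotient.eq.2 hq]

theorem homogeneousComponent_aeval {R σ τ : Type*} [CommRing R] {L : σ → MvPolynomial τ R}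
    (hL : ∀ i, (L i).IsHomogeneous 1) (m : ℕ) (p : MvPolynomial σ R) :
    homogeneousComponent m (aeval L p) = aeval L (homogeneousComponent m p) := by
  induction p using MvPolynomial.induction_on' with
  | monomial d a =>
    have hd : (aeval L (monomial d a)).IsHomogeneous d.degree := by
      simpa using (isHomogeneous_monomial a rfl).aeval L hL
    rw [homogeneousComponent_of_mem hd,
      homogeneousComponent_of_mem (isHomogeneous_monomial a (rfl : d.degree = d.degree))]
    split_ifs <;> simp
  | add p q hp hq => simp only [map_add, hp, hq]

section Reduction

variable {K : Type} [Field K] {N : ℕ} {I : Ideal (MvPolynomial (Fin N) K)}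

theorem exists_isHomogeneous_aeval_sub_mem {c : ℕ} (hc : hilbOf I 1 ≤ c) :
    ∃ L : Fin c → MvPolynomial (Fin N) K, (∀ i, (L i).IsHomogeneous 1) ∧
      ∀ i, ∃ q : MvPolynomial (Fin c) K, X i - aeval L q ∈ I := by
  obtain ⟨L, hL⟩ := exists_sub_sum_smul_mem_of_finrank_quotient_le (degreePart I 1) hc
  refine ⟨fun i => L i, fun i => (L i).2, fun i => ?_⟩
  obtain ⟨a, ha⟩ := hL ⟨X i, isHomogeneous_X K i⟩
  exact ⟨∑ k, a k • X k, by simpa [degreePart] using ha⟩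

theorem hilbOf_comap_aeval (hI : IsStdHomogeneous I) {c : ℕ} {L : Fin c → MvPolynomial (Fin N) K}
    (hL : ∀ i, (L i).IsHomogeneous 1)
    (hsurj : Function.Surjective ((Ideal.Quotient.mkₐ K I).comp (aeval L))) (d : ℕ) :
    hilbOf (I.comap (aeval (R := K) L)) d = hilbOf I d := by
  have hmaps : ∀ q ∈ homogeneousSubmodule (Fin c) K d,
      (aeval L).toLinearMap q ∈ homogeneousSubmodule (Fin N) K d := fun q hq => by
    simpa using hq.aeval L hL
  let ρ := (degreePart I d).mkQ ∘ₗ (aeval L).toLinearMap.restrict hmaps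
  have hker : LinearMap.ker ρ = degreePart (I.comap (aeval L)) d := by
    ext q
    simp only [ρ, LinearMap.mem_ker, LinearMap.comp_apply, Submodule.mkQ_apply,
      Submodule.Quotient.mk_eq_zero]
    rfl
  have hρ : Function.Surjective ρ := by
    intro p
    obtain ⟨p, rfl⟩ := (degreePart I d).mkQ_surjective p
    obtain ⟨q, hq⟩ := hsurj (Ideal.Quotient.mk I p)
    have hqp : aeval L q - p ∈ I := Ideal.Quotient.eq.1 hq
    refine ⟨⟨homogeneousComponent d q, homogeneousComponent_isHomogeneous d q⟩,
      (Submodule.Quotient.eq _).2 ?_⟩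
    have := hI _ hqp d
    rwa [map_sub, homogeneousComponent_aeval hL, homogeneousComponent_of_mem p.2,
      if_pos rfl] at this
  have := (ρ.quotKerEquivOfSurjective hρ).finrank_eq
  rwa [hker] at this

end Reduction

theorem exists_ideal_hilbOf_eq {K : Type} [Field K] {N : ℕ} {I : Ideal (MvPolynomial (Fin N) K)}
    (hI : IsStdHomogeneous I) {c : ℕ} (hc : hilbOf I 1 ≤ c) :
    ∃ J : Ideal (MvPolynomial (Fin c) K), ∀ d, hilbOf J d = hilbOf I d := by
  obtain ⟨L, hL1, hL⟩ := exists_isHomogeneous_aeval_sub_mem hc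
  exact ⟨_, hilbOf_comap_aeval hI hL1 (surjective_mk_comp_aeval hL)⟩

theorem OSequence.le_ncard_of_lt_choose {K : Type} [Field K] {n : ℕ} {h : ℕ → ℕ}
    (hO : OSequence K h) (hc1 : h 1 ≤ n + 1) {α : ℕ} (hα : h α < (n + α).choose α) (d : ℕ)
    (hαd : α ≤ d) : h d ≤ {b : Fin (n + 1) →₀ ℕ | b.degree = d ∧ b 0 < α}.ncard := by
  obtain ⟨-, N, I, hI, hh⟩ := hO
  obtain ⟨J, hJ⟩ := exists_ideal_hilbOf_eq hI (hh 1 ▸ hc1)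
  have hJα : hilbOf J α < Module.finrank K (homogeneousSubmodule (Fin (n + 1)) K α) := by
    rwa [hJ, ← hh, finrank_homogeneousSubmodule, ncard_setOf_degree_eq]
  have := hilbOf_add_finrank_le J hJα hαd
  rw [finrank_homogeneousSubmodule, finrank_homogeneousSubmodule,
    ncard_setOf_degree_eq_add 0 hαd, hJ, ← hh] at this
  omega

/-- Corollary 5.15:  let `h = (h_0,…,h_t)` be an O-sequence with `h_1 ≤ c` and let
`(h^0,…,h^{α−1})` be its decomposition, `α` being the initial degree of the associated
lex-segment ideal.  Then `LOIM(h) = ⋃_{j=0}^{α−1} y_c^j · LOIM(h^j)`, where `LOIM(h^j)`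
is taken inside `K[y_1,…,y_{c−1}]`. -/
theorem LOIM_decomposition {K : Type} [Field K] (c : ℕ) (hc : 1 ≤ c)
    (t : ℕ) (h : ℕ → ℕ) (hO : OSequence K h) (hfin : ∀ i, t < i → h i = 0)
    (hc1 : h 1 ≤ c) :
    LOIMset c h =
      {x : Fin c →₀ ℕ | ∃ j < alphaOf c h, ∃ b ∈ LOIMsetBar c (hdecomp c h j),
        x = b + Finsupp.single (⟨c - 1, by omega⟩ : Fin c) j} := by
  obtain ⟨n, rfl⟩ := Nat.exists_eq_add_of_le' hc
  have hα : h (alphaOf (n + 1) h) < (n + alphaOf (n + 1) h).choose (alphaOf (n + 1) h) := by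
    refine Nat.sInf_mem (s := {i | h i < (n + 1 - 1 + i).choose i}) ⟨t + 1, ?_⟩
    simp [hfin (t + 1) (Nat.lt_succ_self t), Nat.choose_pos]
  exact LOIMset_eq_of_le_ncard (hO.le_ncard_of_lt_choose hc1 hα)

end GorensteinSI
end

section
/- Suppose every (c+1)-element subset of the set M_{c,t} of 2t+c linear forms is linearly independent over K. Let h = (h_0,…,h_v) and h′ = (h′_0,…,h′_{v′}) be O-sequences with h_v ≠ 0, h′_{v′} ≠ 0, h_1 ≤ c, v′ ≤ v ≤ t, and h′_i ≤ h_i for all 0 ≤ i ≤ v′. Then I_{c,t}(h) ⊆ I_{c,t}(h′). -/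
open MvPolynomial

namespace GorensteinSI

/-- The largest index where a (finitely supported) sequence is nonzero. -/
noncomputable def lastNonzero (h : ℕ → ℕ) : ℕ := sSup {i : ℕ | h i ≠ 0}

/-- The recursively defined ideal `I_{c,t}(h)` of Theorem 5.7:
`I_{1,t}(h) = (M_{t−v}·M_{t−v+1}⋯M_t)` and, for `c > 1`,
`I_{c,t}(h) = ⋂_{j=0}^{α−1} [I_{c−1,t−j}(h^j) + (L_{t−j+(c−2)/2})]` if `c` is even,
`I_{c,t}(h) = ⋂_{j=0}^{α−1} [I_{c−1,t−j}(h^j) + (M_{t−j+(c−1)/2})]` if `c` is odd. -/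
noncomputable def Ict {K : Type} [Field K] {n : ℕ}
    (M L : ℕ → MvPolynomial (Fin (n + 1)) K) :
    ℕ → ℕ → (ℕ → ℕ) → Ideal (MvPolynomial (Fin (n + 1)) K)
  | 0, _, _ => ⊤
  | 1, t, h => Ideal.span {∏ i ∈ Finset.Icc (t - lastNonzero h) t, M i}
  | (c + 2), t, h =>
      ⨅ j ∈ Finset.range (alphaOf (c + 2) h),
        (Ict M L (c + 1) (t - j) (hdecomp (c + 2) h j) ⊔
          Ideal.span {if (c + 2) % 2 = 0 then L (t - j + c / 2)
            else M (t - j + (c + 1) / 2)})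

/-- Membership in `M_{c,t} = {M_0,…,M_{t+⌊(c−1)/2⌋}, L_0,…,L_{t+⌊(c−2)/2⌋}}`, encoded
by indices: `Sum.inl k` for `M_k`, `Sum.inr k` for `L_k`. -/
def validMct (c t : ℕ) : ℕ ⊕ ℕ → Prop :=
  fun x => match x with
    | Sum.inl k => (k : ℤ) ≤ (t : ℤ) + ((c : ℤ) - 1).fdiv 2
    | Sum.inr k => (k : ℤ) ≤ (t : ℤ) + ((c : ℤ) - 2).fdiv 2

lemma finite_deg {c d : ℕ} : {b : Fin c →₀ ℕ | b.degree = d}.Finite :=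
  (Finsupp.finite_of_degree_le d).subset (fun _ hb => le_of_eq hb)

lemma lexSegSet_antitone {c : ℕ} {h h' : ℕ → ℕ} (hle : ∀ i, h' i ≤ h i) :
    lexSegSet c h ⊆ lexSegSet c h' :=
  fun _ ha => lt_of_le_of_lt (hle _) ha

lemma hdecomp_mono {c : ℕ} {h h' : ℕ → ℕ} (hle : ∀ i, h' i ≤ h i) (j i : ℕ) :
    hdecomp c h' j i ≤ hdecomp c h j i := by
  apply Set.ncard_le_ncard
  · rintro a ⟨h1, h2, h3⟩
    exact ⟨h1, h2, fun hc hmem => h3 hc (lexSegSet_antitone hle hmem)⟩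
  · exact finite_deg.subset (fun a ha => ha.2.1)

lemma degree_add_single {c : ℕ} (a : Fin (c + 2) →₀ ℕ) (x : Fin (c + 2)) (j : ℕ) :
    (a + Finsupp.single x j).degree = a.degree + j := by
  simp only [Finsupp.degree_eq_weight_one, map_add]
  congr 1
  simp [Finsupp.weight_apply, Finsupp.sum_single_index]

lemma hdecomp_bounded {c : ℕ} {h : ℕ → ℕ} {B : ℕ} (hB : ∀ i, B < i → h i = 0)
    (j i : ℕ) (hi : B < i) : hdecomp (c + 2) h j i = 0 := by
  rw [hdecomp]
  convert Set.ncard_empty (Fin (c + 2) →₀ ℕ)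
  ext a
  simp only [Set.mem_setOf_eq, Set.mem_empty_iff_false, iff_false, not_and]
  rintro h1 h2 h3
  apply h3 (by omega : 0 < c + 2)
  show h _ < _
  rw [degree_add_single, h2, hB _ (by omega)]
  refine (Set.ncard_pos (finite_deg.subset fun b hb => hb.1)).mpr
    ⟨a + Finsupp.single _ j, by rw [degree_add_single, h2], Or.inl rfl⟩

lemma alphaOf_mono {c : ℕ} {h h' : ℕ → ℕ} (hle : ∀ i, h' i ≤ h i)
    {B : ℕ} (hB : ∀ i, B < i → h i = 0) :
    alphaOf c h' ≤ alphaOf c h := by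
  have hne : {i : ℕ | h i < Nat.choose (c - 1 + i) i}.Nonempty :=
    ⟨B + 1, by
      rw [Set.mem_setOf_eq, hB _ (Nat.lt_succ_self B)]
      exact Nat.choose_pos (Nat.le_add_left _ _)⟩
  exact Nat.sInf_le (lt_of_le_of_lt (hle _) (Nat.sInf_mem hne))

lemma lastNonzero_mono {h h' : ℕ → ℕ} (hle : ∀ i, h' i ≤ h i)
    {B : ℕ} (hB : ∀ i, B < i → h i = 0) : lastNonzero h' ≤ lastNonzero h := by
  rcases Set.eq_empty_or_nonempty {i : ℕ | h' i ≠ 0} with he | hne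
  · rw [lastNonzero, he]
    simp
  · refine csSup_le_csSup ⟨B, fun i hi => ?_⟩ hne
      (fun i hi => fun hi0 => hi (Nat.eq_zero_of_le_zero (hi0 ▸ hle i)))
    by_contra hiB
    exact hi (hB i (by omega))

lemma Ict_mono_aux {K : Type} [Field K] {n : ℕ} (M L : ℕ → MvPolynomial (Fin (n + 1)) K) :
    ∀ (c t : ℕ) (h h' : ℕ → ℕ), (∀ i, h' i ≤ h i) → (∃ B, ∀ k, B < k → h k = 0) →
      Ict M L c t h ≤ Ict M L c t h'
  | 0, t, h, h', hle, hBd => le_rfl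
  | 1, t, h, h', hle, hBd => by
      obtain ⟨B, hB⟩ := hBd
      rw [Ict, Ict]
      rw [Ideal.span_singleton_le_span_singleton]
      apply Finset.prod_dvd_prod_of_subset
      exact Finset.Icc_subset_Icc
        (Nat.sub_le_sub_left (lastNonzero_mono hle hB) t) le_rfl
  | (c + 2), t, h, h', hle, hBd => by
      obtain ⟨B, hB⟩ := hBd
      rw [Ict, Ict]
      refine le_iInf₂ fun j hj => ?_
      have hjα : j ∈ Finset.range (alphaOf (c + 2) h) := by
        rw [Finset.mem_range] at hj ⊢
        exact lt_of_lt_of_le hj (alphaOf_mono hle hB)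
      refine le_trans (biInf_le _ hjα) ?_
      exact sup_le_sup_right
        (Ict_mono_aux M L (c + 1) (t - j) _ _ (hdecomp_mono hle j)
          ⟨B, fun k hk => hdecomp_bounded hB j k hk⟩) _

/-- Theorem 5.7 (last part):  if every `(c+1)`-element subset of the `2t+c` linear
forms `M_{c,t}` is linearly independent, and `h = (h_0,…,h_v)`, `h′ = (h′_0,…,h′_{v′})`
are O-sequences with `h_v ≠ 0`, `h′_{v′} ≠ 0`, `h_1 ≤ c`, `v′ ≤ v ≤ t` and `h′_i ≤ h_i`
for all `0 ≤ i ≤ v′`, then `Z_{c,t}(h′) ⊆ Z_{c,t}(h)`, i.e.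
`I_{c,t}(h) ⊆ I_{c,t}(h′)`. -/
theorem Ict_monotone {K : Type} [Field K] {n c t : ℕ} (hc : 1 ≤ c)
    (M L : ℕ → MvPolynomial (Fin (n + 1)) K)
    (hMlin : ∀ k : ℕ, (k : ℤ) ≤ (t : ℤ) + ((c : ℤ) - 1).fdiv 2 → (M k).IsHomogeneous 1)
    (hLlin : ∀ k : ℕ, (k : ℤ) ≤ (t : ℤ) + ((c : ℤ) - 2).fdiv 2 → (L k).IsHomogeneous 1)
    (hindep : ∀ S : Finset (ℕ ⊕ ℕ), (↑S ⊆ {x | validMct c t x}) → S.card ≤ c + 1 →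
      LinearIndependent K (fun j : S => Sum.elim M L j.1))
    (h h' : ℕ → ℕ) (v v' : ℕ)
    (hO : OSequence K h) (hO' : OSequence K h')
    (hv : h v ≠ 0) (hv' : h' v' ≠ 0)
    (hfin : ∀ i, v < i → h i = 0) (hfin' : ∀ i, v' < i → h' i = 0)
    (hh1 : h 1 ≤ c) (hv'v : v' ≤ v) (hvt : v ≤ t)
    (hle : ∀ i ≤ v', h' i ≤ h i) :
    Ict M L c t h ≤ Ict M L c t h' := by
  refine Ict_mono_aux M L c t h h' (fun i => ?_) ⟨v, hfin⟩
  rcases le_or_gt i v' with hi | hi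
  · exact hle i hi
  · rw [hfin' i hi]; exact Nat.zero_le _

end GorensteinSI
end

section
/- Suppose every (c+2)-element subset of the set M_{c,t} of 2t+c linear forms generates a complete intersection (is linearly independent over K), where n+1 > c. Then the scheme Z_{c,t} defined by I_{Z_{c,t}} is a generalized stick figure: for any three pairwise distinct ideals P_1, P_2, P_3 occurring as components in the defining intersection of I_{Z_{c,t}}, the ideal P_1 + P_2 + P_3 has height at least c+2; equivalently, at least c+2 distinct linear forms of M_{c,t} occur among the 3c listed generators of P_1, P_2, P_3. -/
open MvPolynomial

namespace GorensteinSI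

/-- The linear form attached to position `p` (0-based) in a component of `Z_{c,t}`:
the forms alternate `M_{i_1}, L_{i_2}, M_{i_3}, L_{i_4}, …`. -/
noncomputable def formA {K : Type} [Field K] {n : ℕ}
    (M L : ℕ → MvPolynomial (Fin (n + 1)) K) (p idx : ℕ) :
    MvPolynomial (Fin (n + 1)) K :=
  if p % 2 = 0 then M idx else L idx

/-- Admissibility of an index vector `(i_1,…,i_c)` (0-based: `i 0, …, i (c−1)`) for a
component of `Z_{c,t}`:  `0 ≤ i_1 ≤ i_2 < i_3 ≤ i_4 < ⋯` with the last index bounded by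
`t + ⌊(c−2)/2⌋` if `c` is even and by `t + ⌊(c−1)/2⌋` if `c` is odd (when `c` is even the
two bounds agree, so we use `t + (c−1)/2` in natural number division). -/
def admissA (c t : ℕ) (i : ℕ → ℕ) : Prop :=
  (∀ p, p + 1 < c → (if p % 2 = 0 then i p ≤ i (p + 1) else i p < i (p + 1))) ∧
    (i (c - 1) : ℤ) ≤ (t : ℤ) + ((c : ℤ) - 1).fdiv 2

/-- The set of the `c` linear forms generating the component of `Z_{c,t}` with index
vector `i`. -/
noncomputable def gensA {K : Type} [Field K] {n : ℕ}
    (M L : ℕ → MvPolynomial (Fin (n + 1)) K) (c : ℕ) (i : ℕ → ℕ) :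
    Set (MvPolynomial (Fin (n + 1)) K) :=
  {q | ∃ p < c, q = formA M L p (i p)}

/-! Number the forms of `M_{c,t}` as `M_0, L_0, M_1, L_1, …`, i.e. `M_k ↦ 2k`, `L_k ↦ 2k+1`
(`Equiv.natSumNatEquivNat`); the valid forms are then exactly the numbers `< 2t + c`. The
admissibility inequalities say that the numbers of the forms of a component increase strictly
and that the one in position `p` has the parity of `p`. So a component is a `c`-subset of
`ℕ` in which every element has the parity of its rank. If three distinct such sets had only
`c + 1` elements in total, they would be `U` minus one of three points `a < b < d`; then `b`
has one rank more in `U.erase a` than in `U.erase d`, contradicting the parity condition.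
Finally, linear independence of pairs makes the numbering injective on the forms. -/

open Finset

lemma fdiv_two_eq_ediv (a : ℤ) : a.fdiv 2 = a / 2 := by
  simp [Int.fdiv_eq_ediv]

lemma formA_eq_sumElim {K : Type} [Field K] {n : ℕ} (M L : ℕ → MvPolynomial (Fin (n + 1)) K)
    (p k : ℕ) :
    formA M L p k = Sum.elim M L (Equiv.natSumNatEquivNat.symm (2 * k + p % 2)) := by
  rcases Nat.mod_two_eq_zero_or_one p with hp | hp <;>
    simp [formA, hp]

lemma validMct_natSumNatEquivNat_symm {c t v : ℕ} (hv : v < 2 * t + c) :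
    validMct c t (Equiv.natSumNatEquivNat.symm v) := by
  obtain ⟨x, rfl⟩ := Equiv.natSumNatEquivNat.surjective v
  rcases x with k | k <;>
    simp only [Equiv.symm_apply_apply, validMct, fdiv_two_eq_ediv] <;>
    simp only [Equiv.natSumNatEquivNat_apply, Sum.elim_inl, Sum.elim_inr] at hv <;>
    omega

def code (i : ℕ → ℕ) (p : ℕ) : ℕ := 2 * i p + p % 2

def codeSet (c : ℕ) (i : ℕ → ℕ) : Finset ℕ := (range c).image (code i)

def IsParityRanked (V : Finset ℕ) : Prop := ∀ v ∈ V, #{w ∈ V | w < v} % 2 = v % 2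

section Admissible

variable {c t : ℕ} {i : ℕ → ℕ}

lemma admissA.strictMonoOn_code (h : admissA c t i) : StrictMonoOn (code i) (Set.Iio c) :=
  strictMonoOn_of_lt_succ Set.ordConnected_Iio fun p _ _ hp => by
    have := h.1 p hp
    simp only [Order.succ_eq_add_one, code]
    split_ifs at this <;> omega

lemma admissA.code_lt (h : admissA c t i) {p : ℕ} (hp : p < c) : code i p < 2 * t + c := by
  have hlast := h.2
  rw [fdiv_two_eq_ediv] at hlast
  have hmono : code i p ≤ code i (c - 1) :=
    h.strictMonoOn_code.monotoneOn hp (by simp; omega) (by omega)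
  simp only [code] at hmono ⊢
  omega

lemma admissA.card_codeSet (h : admissA c t i) : #(codeSet c i) = c := by
  rw [codeSet, card_image_of_injOn (by simpa using h.strictMonoOn_code.injOn), card_range]

lemma admissA.codeSet_subset (h : admissA c t i) : codeSet c i ⊆ range (2 * t + c) := by
  simp only [codeSet, image_subset_iff, mem_range]
  exact fun p hp => h.code_lt hp

lemma admissA.isParityRanked_codeSet (h : admissA c t i) : IsParityRanked (codeSet c i) := by
  simp only [IsParityRanked, codeSet, forall_mem_image, mem_range]
  intro p hp
  have hbelow : {w ∈ (range c).image (code i) | w < code i p} = (range p).image (code i) := by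
    ext w
    simp only [mem_filter, mem_image, mem_range]
    constructor
    · rintro ⟨⟨q, hq, rfl⟩, hlt⟩
      exact ⟨q, (h.strictMonoOn_code.lt_iff_lt hq hp).1 hlt, rfl⟩
    · rintro ⟨q, hq, rfl⟩
      exact ⟨⟨q, by omega, rfl⟩, h.strictMonoOn_code (by simp; omega) hp hq⟩
  rw [hbelow, card_image_of_injOn, card_range]
  · simp [code]
  · exact h.strictMonoOn_code.injOn.mono fun q hq => by simp at hq ⊢; omega

end Admissible

lemma not_isParityRanked_erase_of_lt_of_lt {U : Finset ℕ} {a b d : ℕ} (ha : a ∈ U)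
    (hb : b ∈ U) (hab : a < b) (hbd : b < d) (hUa : IsParityRanked (U.erase a)) :
    ¬ IsParityRanked (U.erase d) := by
  intro hUd
  have hrank_a := hUa b (mem_erase.2 ⟨by omega, hb⟩)
  have hrank_d := hUd b (mem_erase.2 ⟨by omega, hb⟩)
  have ha_below : a ∈ {w ∈ U | w < b} := mem_filter.2 ⟨ha, hab⟩
  rw [filter_erase, card_erase_of_mem ha_below] at hrank_a
  rw [filter_erase, erase_eq_of_notMem (by simp; omega)] at hrank_d
  have := card_pos.2 ⟨a, ha_below⟩
  omega

lemma exists_eq_erase_of_subset_of_card_eq {α : Type*} [DecidableEq α] {U V : Finset α}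
    (hVU : V ⊆ U) (hcard : #U = #V + 1) :
    ∃ x ∈ U, V = U.erase x := by
  obtain ⟨x, hxV, rfl⟩ := exists_eq_insert_iff.2 ⟨hVU, hcard.symm⟩
  exact ⟨x, mem_insert_self x V, (erase_insert hxV).symm⟩

lemma add_two_le_card_union_of_isParityRanked {c : ℕ} {V₁ V₂ V₃ : Finset ℕ}
    (hc₁ : #V₁ = c) (hc₂ : #V₂ = c) (hc₃ : #V₃ = c)
    (hV₁ : IsParityRanked V₁) (hV₂ : IsParityRanked V₂) (hV₃ : IsParityRanked V₃)
    (h₁₂ : V₁ ≠ V₂) (h₁₃ : V₁ ≠ V₃) (h₂₃ : V₂ ≠ V₃) :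
    c + 2 ≤ #(V₁ ∪ V₂ ∪ V₃) := by
  set U := V₁ ∪ V₂ ∪ V₃
  have hs₁ : V₁ ⊆ U := subset_union_left.trans subset_union_left
  have hs₂ : V₂ ⊆ U := subset_union_right.trans subset_union_left
  have hs₃ : V₃ ⊆ U := subset_union_right
  by_contra! hlt
  have hcU : c ≤ #U := hc₁ ▸ card_le_card hs₁
  have hU : #U = c + 1 := by
    by_contra hU
    have hV₁U := eq_of_subset_of_card_le hs₁ (by omega)
    have hV₂U := eq_of_subset_of_card_le hs₂ (by omega)
    exact h₁₂ (hV₁U.trans hV₂U.symm)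
  obtain ⟨x₁, hx₁, e₁⟩ := exists_eq_erase_of_subset_of_card_eq hs₁ (by omega)
  obtain ⟨x₂, hx₂, e₂⟩ := exists_eq_erase_of_subset_of_card_eq hs₂ (by omega)
  obtain ⟨x₃, hx₃, e₃⟩ := exists_eq_erase_of_subset_of_card_eq hs₃ (by omega)
  have hx₁₂ : x₁ ≠ x₂ := fun h => h₁₂ (by rw [e₁, e₂, h])
  have hx₁₃ : x₁ ≠ x₃ := fun h => h₁₃ (by rw [e₁, e₃, h])
  have hx₂₃ : x₂ ≠ x₃ := fun h => h₂₃ (by rw [e₂, e₃, h])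
  rw [e₁] at hV₁
  rw [e₂] at hV₂
  rw [e₃] at hV₃
  have : (x₁ < x₂ ∧ x₂ < x₃ ∨ x₃ < x₂ ∧ x₂ < x₁) ∨ (x₂ < x₁ ∧ x₁ < x₃ ∨ x₃ < x₁ ∧ x₁ < x₂) ∨
      (x₁ < x₃ ∧ x₃ < x₂ ∨ x₂ < x₃ ∧ x₃ < x₁) := by
    omega
  rcases this with (⟨h, h'⟩ | ⟨h, h'⟩) | (⟨h, h'⟩ | ⟨h, h'⟩) | (⟨h, h'⟩ | ⟨h, h'⟩)
  · exact not_isParityRanked_erase_of_lt_of_lt hx₁ hx₂ h h' hV₁ hV₃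
  · exact not_isParityRanked_erase_of_lt_of_lt hx₃ hx₂ h h' hV₃ hV₁
  · exact not_isParityRanked_erase_of_lt_of_lt hx₂ hx₁ h h' hV₂ hV₃
  · exact not_isParityRanked_erase_of_lt_of_lt hx₃ hx₁ h h' hV₃ hV₂
  · exact not_isParityRanked_erase_of_lt_of_lt hx₁ hx₃ h h' hV₁ hV₂
  · exact not_isParityRanked_erase_of_lt_of_lt hx₂ hx₃ h h' hV₂ hV₁

lemma injOn_of_linearIndependent_pair {R V ι : Type*} [Ring R] [Nontrivial R] [AddCommGroup V]
    [Module R V] [DecidableEq ι] {f : ι → V} {S : Set ι}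
    (h : ∀ T : Finset ι, ↑T ⊆ S → #T ≤ 2 → LinearIndependent R (fun j : T => f j)) :
    S.InjOn f := by
  intro x hx y hy hxy
  have hli := h {x, y} (by simp [Set.insert_subset_iff, hx, hy]) (card_le_two)
  simpa using hli.injective (a₁ := ⟨x, by simp⟩) (a₂ := ⟨y, by simp⟩) hxy

lemma gensA_eq_image_codeSet {K : Type} [Field K] {n : ℕ}
    (M L : ℕ → MvPolynomial (Fin (n + 1)) K) (c : ℕ) (i : ℕ → ℕ) :
    gensA M L c i = (Sum.elim M L ∘ Equiv.natSumNatEquivNat.symm) '' codeSet c i := by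
  rw [codeSet, coe_image, ← Set.image_comp]
  ext q
  simp only [gensA, Set.mem_ofPred_eq, Set.mem_image, coe_range, Set.mem_Iio,
    Function.comp_apply, code, ← formA_eq_sumElim, eq_comm]

theorem Z_is_generalized_stick_figure_general {K : Type} [Field K] {n c t : ℕ}
    (M L : ℕ → MvPolynomial (Fin (n + 1)) K)
    (hindep : ∀ S : Finset (ℕ ⊕ ℕ), (↑S ⊆ {x | validMct c t x}) → S.card ≤ c + 2 →
      LinearIndependent K (fun j : S => Sum.elim M L j.1)) :
    ∀ i₁ i₂ i₃ : ℕ → ℕ, admissA c t i₁ → admissA c t i₂ → admissA c t i₃ →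
      Ideal.span (gensA M L c i₁) ≠ Ideal.span (gensA M L c i₂) →
      Ideal.span (gensA M L c i₁) ≠ Ideal.span (gensA M L c i₃) →
      Ideal.span (gensA M L c i₂) ≠ Ideal.span (gensA M L c i₃) →
      c + 2 ≤ (gensA M L c i₁ ∪ gensA M L c i₂ ∪ gensA M L c i₃).ncard := by
  intro i₁ i₂ i₃ h₁ h₂ h₃ h₁₂ h₁₃ h₂₃
  have hinj : Set.InjOn (Sum.elim M L ∘ Equiv.natSumNatEquivNat.symm) ↑(range (2 * t + c)) :=
    (injOn_of_linearIndependent_pair fun T hT hcard => hindep T hT (by omega)).comp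
      Equiv.natSumNatEquivNat.symm.injective.injOn
      fun v hv => validMct_natSumNatEquivNat_symm (mem_range.1 hv)
  have hsub : codeSet c i₁ ∪ codeSet c i₂ ∪ codeSet c i₃ ⊆ range (2 * t + c) :=
    union_subset (union_subset h₁.codeSet_subset h₂.codeSet_subset) h₃.codeSet_subset
  have hcodeSet_ne {i j : ℕ → ℕ}
      (hij : Ideal.span (gensA M L c i) ≠ Ideal.span (gensA M L c j)) :
      codeSet c i ≠ codeSet c j :=
    fun h => hij (by rw [gensA_eq_image_codeSet, gensA_eq_image_codeSet, h])
  simp only [gensA_eq_image_codeSet, ← Set.image_union, ← coe_union]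
  rw [(hinj.mono (coe_subset.2 hsub)).ncard_image, Set.ncard_coe_finset]
  exact add_two_le_card_union_of_isParityRanked h₁.card_codeSet h₂.card_codeSet h₃.card_codeSet
    h₁.isParityRanked_codeSet h₂.isParityRanked_codeSet h₃.isParityRanked_codeSet
    (hcodeSet_ne h₁₂) (hcodeSet_ne h₁₃) (hcodeSet_ne h₂₃)

/-- Theorem 4.1 (last part):  if every `(c+2)`-element subset of the `2t+c` linear forms
`M_{c,t}` is linearly independent then the scheme `Z_{c,t}` (defined by the intersection
`I_{Z_{c,t}}` of the component ideals `(M_{i_1}, L_{i_2}, M_{i_3}, …)`) is a generalized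
stick figure: among the `3c` generators of any three pairwise distinct components at
least `c+2` distinct linear forms of `M_{c,t}` occur (equivalently, the sum of the three
component ideals has height at least `c+2`). -/
theorem Z_is_generalized_stick_figure {K : Type} [Field K] {n c t : ℕ}
    (hc : 1 ≤ c) (hcn : c < n + 1)
    (M L : ℕ → MvPolynomial (Fin (n + 1)) K)
    (hMlin : ∀ k : ℕ, (k : ℤ) ≤ (t : ℤ) + ((c : ℤ) - 1).fdiv 2 → (M k).IsHomogeneous 1)
    (hLlin : ∀ k : ℕ, (k : ℤ) ≤ (t : ℤ) + ((c : ℤ) - 2).fdiv 2 → (L k).IsHomogeneous 1)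
    (hindep : ∀ S : Finset (ℕ ⊕ ℕ), (↑S ⊆ {x | validMct c t x}) → S.card ≤ c + 2 →
      LinearIndependent K (fun j : S => Sum.elim M L j.1)) :
    ∀ i₁ i₂ i₃ : ℕ → ℕ, admissA c t i₁ → admissA c t i₂ → admissA c t i₃ →
      Ideal.span (gensA M L c i₁) ≠ Ideal.span (gensA M L c i₂) →
      Ideal.span (gensA M L c i₁) ≠ Ideal.span (gensA M L c i₃) →
      Ideal.span (gensA M L c i₂) ≠ Ideal.span (gensA M L c i₃) →
      c + 2 ≤ (gensA M L c i₁ ∪ gensA M L c i₂ ∪ gensA M L c i₃).ncard :=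
  Z_is_generalized_stick_figure_general M L hindep

end GorensteinSI
end
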